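/- arXiv:0711.0708 — 10 statements merged into one kernel-verified Lean document; each statement's English description precedes it below -/
import Mathlib

section
/- Let X, Z ∈ F_q^{N×M} and Y = X + Z. Then the subspace distance between the row spaces of X and Y satisfies d_S(⟨X⟩, ⟨Y⟩) ≤ 2·rank Z − |rank X − rank Y|. -/
/-- The row space of a matrix: the span of its rows. -/
noncomputable def rowSpace {F : Type*} [Field F] {ι κ : Type*}
    (M : Matrix ι κ F) : Submodule F (κ → F) :=
  Submodule.span F (Set.range fun i => M i)

/-- The subspace distance `d_S(U,V) = dim(U + V) - dim(U ∩ V)`. -/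
noncomputable def sDist {F : Type*} [Field F] {κ : Type*}
    (U V : Submodule F (κ → F)) : ℕ :=
  Module.finrank F ↥(U ⊔ V) - Module.finrank F ↥(U ⊓ V)

lemma finrank_rowSpace {F : Type*} [Field F] {N M : ℕ}
    (A : Matrix (Fin N) (Fin M) F) :
    Module.finrank F (rowSpace A) = A.rank := by
  rw [Matrix.rank_eq_finrank_span_row]; rfl

lemma rowSpace_add_le {F : Type*} [Field F] {N M : ℕ}
    (A B : Matrix (Fin N) (Fin M) F) :
    rowSpace (A + B) ≤ rowSpace A ⊔ rowSpace B := by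
  rw [rowSpace, Submodule.span_le]
  rintro _ ⟨i, rfl⟩
  exact Submodule.add_mem _
    (Submodule.mem_sup_left (Submodule.subset_span ⟨i, rfl⟩))
    (Submodule.mem_sup_right (Submodule.subset_span ⟨i, rfl⟩))

lemma rowSpace_neg {F : Type*} [Field F] {N M : ℕ}
    (A : Matrix (Fin N) (Fin M) F) : rowSpace (-A) = rowSpace A := by
  unfold rowSpace
  apply le_antisymm <;> rw [Submodule.span_le] <;> rintro _ ⟨i, rfl⟩
  · exact Submodule.neg_mem _ (Submodule.subset_span ⟨i, rfl⟩)
  · have : (fun i => A i) i = -((fun i => (-A) i) i) := by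
      funext j; simp [Matrix.neg_apply]
    rw [this]
    exact Submodule.neg_mem _ (Submodule.subset_span ⟨i, rfl⟩)

/-- If `Y = X + Z` then
`d_S(⟨X⟩, ⟨Y⟩) ≤ 2·rank Z − |rank X − rank Y|`. -/
theorem sDist_rowSpace_le_two_rank_sub_abs
    {F : Type*} [Field F] [Fintype F] {N M : ℕ}
    (X Z Y : Matrix (Fin N) (Fin M) F) (hY : Y = X + Z) :
    (sDist (rowSpace X) (rowSpace Y) : ℤ) ≤
      2 * (Z.rank : ℤ) - |(X.rank : ℤ) - (Y.rank : ℤ)| := by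
  set U := rowSpace X
  set V := rowSpace Y
  set W := rowSpace Z
  have hVle : V ≤ U ⊔ W := by
    show rowSpace Y ≤ _
    rw [hY]; exact rowSpace_add_le X Z
  have hUle : U ≤ V ⊔ W := by
    have hX : X = Y + (-Z) := by rw [hY]; abel
    show rowSpace X ≤ _
    rw [hX]
    exact (rowSpace_add_le Y (-Z)).trans (by rw [rowSpace_neg])
  haveI : FiniteDimensional F (Fin M → F) := inferInstance
  -- dimension facts
  have hU : Module.finrank F U = X.rank := finrank_rowSpace X
  have hV : Module.finrank F V = Y.rank := finrank_rowSpace Y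
  have hW : Module.finrank F W = Z.rank := finrank_rowSpace Z
  have hdimform : Module.finrank F ↥(U ⊔ V) + Module.finrank F ↥(U ⊓ V)
      = Module.finrank F U + Module.finrank F V :=
    Submodule.finrank_sup_add_finrank_inf_eq U V
  have h1 : Module.finrank F ↥(U ⊔ V) ≤ X.rank + Z.rank := by
    calc Module.finrank F ↥(U ⊔ V) ≤ Module.finrank F ↥(U ⊔ W) :=
          Submodule.finrank_mono (sup_le le_sup_left hVle)
    _ ≤ Module.finrank F U + Module.finrank F W := Submodule.finrank_add_le_finrank_add_finrank U W
    _ = X.rank + Z.rank := by rw [hU, hW]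
  have h2 : Module.finrank F ↥(U ⊔ V) ≤ Y.rank + Z.rank := by
    calc Module.finrank F ↥(U ⊔ V) ≤ Module.finrank F ↥(V ⊔ W) :=
          Submodule.finrank_mono (sup_le hUle le_sup_left)
    _ ≤ Module.finrank F V + Module.finrank F W := Submodule.finrank_add_le_finrank_add_finrank V W
    _ = Y.rank + Z.rank := by rw [hV, hW]
  have hle : Module.finrank F ↥(U ⊓ V) ≤ Module.finrank F ↥(U ⊔ V) :=
    Submodule.finrank_mono (le_trans inf_le_left le_sup_left)
  have hsd : (sDist U V : ℤ) =
      (Module.finrank F ↥(U ⊔ V) : ℤ) - (Module.finrank F ↥(U ⊓ V) : ℤ) := by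
    unfold sDist; omega
  rw [hsd]
  rcases abs_cases ((X.rank : ℤ) - (Y.rank : ℤ)) with ⟨h3, _⟩ | ⟨h3, _⟩ <;> rw [h3] <;> omega
end

section
/- Let X ∈ F_q^{n×M}, A ∈ F_q^{N×n}, Z ∈ F_q^{ℓ×M}, B ∈ F_q^{N×ℓ}, and Y = AX + BZ. If rank A ≥ n − ρ and Z has at most t nonzero rows, then d_S(⟨X⟩, ⟨Y⟩) ≤ ρ + 2t. -/
/-!
The subspace distance satisfies the triangle inequality, so route through `⟨AX⟩`.
Since `⟨AX⟩ ≤ ⟨X⟩`, the distance `d_S(⟨X⟩, ⟨AX⟩)` is the codimension of `⟨AX⟩` in `⟨X⟩`,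
which Sylvester's rank inequality bounds by `n - rank A ≤ ρ`. Each of `⟨AX⟩` and `⟨Y⟩` lies in
the other plus `⟨Z⟩`, a space of dimension at most `t`; this bounds `d_S(⟨AX⟩, ⟨Y⟩)` by `2t`.
-/

open Module

/-- Sylvester's rank inequality, coordinate-free. -/
theorem LinearMap.finrank_range_add_finrank_le {K V W : Type*} [DivisionRing K]
    [AddCommGroup V] [Module K V] [FiniteDimensional K V] [AddCommGroup W] [Module K W]
    (f : V →ₗ[K] W) (p : Submodule K V) :
    finrank K (range f) + finrank K p ≤ finrank K (p.map f) + finrank K V := by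
  obtain ⟨q, hpq⟩ := p.exists_isCompl
  have hrange : range f = p.map f ⊔ q.map f := by
    rw [← Submodule.map_sup, hpq.sup_eq_top, Submodule.map_top]
  calc finrank K (range f) + finrank K p
      ≤ finrank K (p.map f) + finrank K (q.map f) + finrank K p := by
        rw [hrange]; gcongr; exact Submodule.finrank_add_le_finrank_add_finrank _ _
    _ ≤ finrank K (p.map f) + finrank K q + finrank K p := by
        gcongr; exact Submodule.finrank_map_le f q
    _ = finrank K (p.map f) + finrank K V := by
        rw [add_assoc, add_comm (finrank K q), Submodule.finrank_add_eq_of_isCompl hpq]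

section sDist

variable {F κ : Type*} [Field F] [Fintype κ] (U V W : Submodule F (κ → F))

theorem sDist_add_two_mul_finrank_inf :
    sDist U V + 2 * finrank F ↥(U ⊓ V) = finrank F U + finrank F V := by
  have hinf : finrank F ↥(U ⊓ V) ≤ finrank F ↥(U ⊔ V) :=
    Submodule.finrank_mono (inf_le_left.trans le_sup_left)
  have := Submodule.finrank_sup_add_finrank_inf_eq U V
  unfold sDist
  omega

theorem sDist_triangle : sDist U W ≤ sDist U V + sDist V W := by
  have key : finrank F ↥(U ⊓ V) + finrank F ↥(V ⊓ W) ≤ finrank F V + finrank F ↥(U ⊓ W) := by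
    have hsum : U ⊓ V ⊔ V ⊓ W ≤ V := sup_le inf_le_right inf_le_left
    have hcap : U ⊓ V ⊓ (V ⊓ W) ≤ U ⊓ W :=
      le_inf (inf_le_left.trans inf_le_left) (inf_le_right.trans inf_le_right)
    rw [← Submodule.finrank_sup_add_finrank_inf_eq]
    exact add_le_add (Submodule.finrank_mono hsum) (Submodule.finrank_mono hcap)
  have := sDist_add_two_mul_finrank_inf U V
  have := sDist_add_two_mul_finrank_inf V W
  have := sDist_add_two_mul_finrank_inf U W
  omega

theorem sDist_eq_of_le {U V : Submodule F (κ → F)} (h : V ≤ U) :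
    sDist U V = finrank F U - finrank F V := by
  have := sDist_add_two_mul_finrank_inf U V
  rw [inf_eq_right.2 h] at this
  omega

theorem sDist_le_two_mul_finrank_of_le_sup {U V W : Submodule F (κ → F)} (hV : V ≤ U ⊔ W)
    (hU : U ≤ V ⊔ W) :
    sDist U V ≤ 2 * finrank F W := by
  have hUV := Submodule.finrank_sup_add_finrank_inf_eq U V
  have hUW := Submodule.finrank_add_le_finrank_add_finrank U W
  have hVW := Submodule.finrank_add_le_finrank_add_finrank V W
  have h₁ := Submodule.finrank_mono (sup_le le_sup_left hV)
  have h₂ := Submodule.finrank_mono (sup_le hU le_sup_left)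
  have := sDist_add_two_mul_finrank_inf U V
  omega

end sDist

section rowSpace

variable {F : Type*} [Field F] {l m n : Type*}

theorem rowSpace_eq_range_vecMulLinear [Fintype m] (M : Matrix m n F) :
    rowSpace M = LinearMap.range M.vecMulLinear :=
  (range_vecMulLinear M).symm

theorem finrank_rowSpace_s2 [Fintype m] [Fintype n] (M : Matrix m n F) :
    finrank F (rowSpace M) = M.rank :=
  (M.rank_eq_finrank_span_row).symm

theorem rowSpace_mul [Fintype l] [Fintype m] (A : Matrix l m F) (X : Matrix m n F) :
    rowSpace (A * X) = (rowSpace A).map X.vecMulLinear := by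
  rw [rowSpace_eq_range_vecMulLinear, rowSpace_eq_range_vecMulLinear, ← LinearMap.range_comp]
  congr 1
  ext v
  simp [Matrix.vecMul_vecMul]

theorem rowSpace_add_le_s2 (P Q : Matrix m n F) : rowSpace (P + Q) ≤ rowSpace P ⊔ rowSpace Q :=
  Submodule.span_le.2 <| Set.range_subset_iff.2 fun i =>
    Submodule.add_mem_sup (Submodule.subset_span ⟨i, rfl⟩) (Submodule.subset_span ⟨i, rfl⟩)

theorem rowSpace_sub_le (P Q : Matrix m n F) : rowSpace (P - Q) ≤ rowSpace P ⊔ rowSpace Q :=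
  Submodule.span_le.2 <| Set.range_subset_iff.2 fun i =>
    Submodule.sub_mem_sup (Submodule.subset_span ⟨i, rfl⟩) (Submodule.subset_span ⟨i, rfl⟩)

theorem rowSpace_mul_le [Fintype l] [Fintype m] (A : Matrix l m F) (X : Matrix m n F) :
    rowSpace (A * X) ≤ rowSpace X := by
  rw [rowSpace_mul, rowSpace_eq_range_vecMulLinear X]
  exact LinearMap.map_le_range

theorem finrank_rowSpace_add_rank_le [Fintype l] [Fintype m] [Fintype n] (A : Matrix l m F)
    (X : Matrix m n F) :
    finrank F (rowSpace X) + A.rank ≤ finrank F (rowSpace (A * X)) + Fintype.card m := by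
  have := X.vecMulLinear.finrank_range_add_finrank_le (rowSpace A)
  rwa [← rowSpace_eq_range_vecMulLinear, finrank_rowSpace_s2 A, ← rowSpace_mul,
    finrank_fintype_fun_eq_card] at this

open scoped Classical in
theorem finrank_rowSpace_le_card_nonzero_rows [Fintype m] (Z : Matrix m n F) :
    finrank F (rowSpace Z) ≤ (Finset.univ.filter fun i => Z i ≠ 0).card := by
  have hspan : rowSpace Z = Submodule.span F (Set.range fun i : {i // Z i ≠ 0} => Z i) := by
    refine le_antisymm (Submodule.span_le.2 (Set.range_subset_iff.2 fun i => ?_))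
      (Submodule.span_mono ?_)
    · by_cases h : Z i = 0
      · simp [h]
      · exact Submodule.subset_span ⟨⟨i, h⟩, rfl⟩
    · rintro _ ⟨i, rfl⟩
      exact ⟨i, rfl⟩
  rw [hspan, ← Fintype.card_subtype]
  exact finrank_range_le_card _

end rowSpace

open scoped Classical in
theorem sDist_rowSpace_le_rho_add_two_t_general
    {F : Type*} [Field F] {n N ℓ M : ℕ} {ρ t : ℕ}
    (X : Matrix (Fin n) (Fin M) F) (A : Matrix (Fin N) (Fin n) F)
    (Z : Matrix (Fin ℓ) (Fin M) F) (B : Matrix (Fin N) (Fin ℓ) F)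
    (Y : Matrix (Fin N) (Fin M) F) (hY : Y = A * X + B * Z)
    (hA : (n : ℤ) - (ρ : ℤ) ≤ (A.rank : ℤ))
    (hZ : (Finset.univ.filter fun i => Z i ≠ 0).card ≤ t) :
    sDist (rowSpace X) (rowSpace Y) ≤ ρ + 2 * t := by
  have hBZ : rowSpace (B * Z) ≤ rowSpace Z := rowSpace_mul_le B Z
  have hX : sDist (rowSpace X) (rowSpace (A * X)) ≤ ρ := by
    have := finrank_rowSpace_add_rank_le A X
    rw [Fintype.card_fin] at this
    rw [sDist_eq_of_le (rowSpace_mul_le A X)]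
    omega
  have hAX : sDist (rowSpace (A * X)) (rowSpace Y) ≤ 2 * t := by
    refine (sDist_le_two_mul_finrank_of_le_sup ?_ ?_).trans
      (Nat.mul_le_mul_left 2 ((finrank_rowSpace_le_card_nonzero_rows Z).trans hZ))
    · exact hY ▸ (rowSpace_add_le_s2 _ _).trans (sup_le_sup_left hBZ _)
    · exact eq_sub_of_add_eq hY.symm ▸ (rowSpace_sub_le _ _).trans (sup_le_sup_left hBZ _)
  calc sDist (rowSpace X) (rowSpace Y)
      ≤ sDist (rowSpace X) (rowSpace (A * X)) + sDist (rowSpace (A * X)) (rowSpace Y) :=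
        sDist_triangle _ _ _
    _ ≤ ρ + 2 * t := add_le_add hX hAX

open scoped Classical in
/-- If `Y = AX + BZ`, `rank A ≥ n − ρ` and `Z` has at most `t`
nonzero rows, then `d_S(⟨X⟩, ⟨Y⟩) ≤ ρ + 2t`. -/
theorem sDist_rowSpace_le_rho_add_two_t
    {F : Type*} [Field F] [Fintype F] {n N ℓ M : ℕ} {ρ t : ℕ}
    (X : Matrix (Fin n) (Fin M) F) (A : Matrix (Fin N) (Fin n) F)
    (Z : Matrix (Fin ℓ) (Fin M) F) (B : Matrix (Fin N) (Fin ℓ) F)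
    (Y : Matrix (Fin N) (Fin M) F) (hY : Y = A * X + B * Z)
    (hA : (n : ℤ) - (ρ : ℤ) ≤ (A.rank : ℤ))
    (hZ : (Finset.univ.filter fun i => Z i ≠ 0).card ≤ t) :
    sDist (rowSpace X) (rowSpace Y) ≤ ρ + 2 * t :=
  sDist_rowSpace_le_rho_add_two_t_general X A Z B Y hY hA hZ
end

section
/- For any matrices x, x' ∈ F_q^{n×m}, the subspace distance between their liftings satisfies d_S(I(x), I(x')) = 2·rank(x' − x) = 2·d_R(x, x'). Consequently, for any rank-metric code C ⊆ F_q^{n×m} with at least two elements, the minimum subspace distance of the lifted code I(C) = {I(x) : x ∈ C} equals twice the minimum rank distance of C. -/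
/-- The lifting `I(x)` of a matrix `x ∈ F_q^{n×m}`: the row space of the
matrix `[I_n | x]`. -/
noncomputable def lifting {F : Type*} [Field F] [DecidableEq F] {n m : ℕ}
    (x : Matrix (Fin n) (Fin m) F) : Submodule F ((Fin n ⊕ Fin m) → F) :=
  rowSpace (Matrix.fromCols (1 : Matrix (Fin n) (Fin n) F) x)

/-!
The lifting `I(x)` is the graph `{(v, v x)}` of the map `v ↦ v x`, so it has dimension `n`, and
two graphs `I(x)`, `I(x')` meet exactly in the graph of `v ↦ v x` restricted to the left kernel of
`x' - x`, of dimension `n - rank (x' - x)`. By Grassmann's formula `dim (I(x) + I(x')) = n + rank (x' - x)`,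
which gives `d_S = 2 rank (x' - x)`. Since distinct matrices have distinct liftings, the set of
subspace distances of `I(C)` is the image of the set of rank distances of `C` under doubling, and
doubling is monotone (and fixes the value `sInf ∅ = 0`).
-/

open Matrix

theorem Matrix.finrank_ker_vecMulLinear {F ι κ : Type*} [Field F] [Fintype ι] [Fintype κ]
    (y : Matrix ι κ F) :
    Module.finrank F (LinearMap.ker y.vecMulLinear) = Fintype.card ι - y.rank := by
  have h := LinearMap.finrank_range_add_finrank_ker y.vecMulLinear
  rw [range_vecMulLinear, ← rank_eq_finrank_span_row, Module.finrank_fintype_fun_eq_card] at h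
  omega

theorem Nat.sInf_image_of_monotone {f : ℕ → ℕ} (hf : Monotone f) (hf0 : f 0 = 0) (S : Set ℕ) :
    sInf (f '' S) = f (sInf S) := by
  rcases S.eq_empty_or_nonempty with rfl | hS
  · simp [hf0]
  · exact (hf.map_csInf hS).symm

section Lifting

variable {F : Type*} [Field F] [DecidableEq F] {n m : ℕ}

theorem lifting_eq_range (x : Matrix (Fin n) (Fin m) F) :
    lifting x = LinearMap.range (fromCols 1 x).vecMulLinear := by
  rw [lifting, rowSpace, range_vecMulLinear]
  rfl

theorem mem_lifting {x : Matrix (Fin n) (Fin m) F} {u : Fin n ⊕ Fin m → F} :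
    u ∈ lifting x ↔ ∃ v : Fin n → F, Sum.elim v (v ᵥ* x) = u := by
  simp [lifting_eq_range]

omit [DecidableEq F] in
theorem injective_vecMulLinear_fromCols_one (x : Matrix (Fin n) (Fin m) F) :
    Function.Injective (fromCols (1 : Matrix (Fin n) (Fin n) F) x).vecMulLinear := fun v w h => by
  simpa using congrArg (· ∘ Sum.inl) h

theorem finrank_lifting (x : Matrix (Fin n) (Fin m) F) :
    Module.finrank F (lifting x) = n := by
  rw [lifting_eq_range, LinearMap.finrank_range_of_inj (injective_vecMulLinear_fromCols_one x)]
  simp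

theorem lifting_inf_lifting (x x' : Matrix (Fin n) (Fin m) F) :
    lifting x ⊓ lifting x' =
      (LinearMap.ker (x' - x).vecMulLinear).map (fromCols 1 x).vecMulLinear := by
  ext u
  simp only [Submodule.mem_inf, mem_lifting, Submodule.mem_map, LinearMap.mem_ker,
    vecMulLinear_apply, vecMul_fromCols, vecMul_one, vecMul_sub, sub_eq_zero]
  constructor
  · rintro ⟨⟨v, rfl⟩, ⟨w, hw⟩⟩
    obtain ⟨rfl, hx⟩ := Sum.elim_eq_iff.mp hw
    exact ⟨w, hx, rfl⟩
  · rintro ⟨v, hv, rfl⟩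
    exact ⟨⟨v, rfl⟩, ⟨v, by rw [hv]⟩⟩

theorem finrank_lifting_inf_lifting (x x' : Matrix (Fin n) (Fin m) F) :
    Module.finrank F ↥(lifting x ⊓ lifting x') = n - (x' - x).rank := by
  rw [lifting_inf_lifting, ← LinearEquiv.finrank_eq (Submodule.equivMapOfInjective _
    (injective_vecMulLinear_fromCols_one x) _), finrank_ker_vecMulLinear, Fintype.card_fin]

theorem sDist_lifting (x x' : Matrix (Fin n) (Fin m) F) :
    sDist (lifting x) (lifting x') = 2 * (x' - x).rank := by
  have hsum := Submodule.finrank_sup_add_finrank_inf_eq (lifting x) (lifting x')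
  have hrank : (x' - x).rank ≤ n := (x' - x).rank_le_height
  rw [finrank_lifting, finrank_lifting, finrank_lifting_inf_lifting] at hsum
  rw [sDist, finrank_lifting_inf_lifting]
  omega

theorem lifting_injective : Function.Injective (lifting (F := F) (n := n) (m := m)) := by
  intro x x' h
  ext i j
  obtain ⟨v, hv⟩ := mem_lifting.mp (h ▸ mem_lifting.mpr ⟨Pi.single i 1, rfl⟩)
  obtain ⟨rfl, hx⟩ := Sum.elim_eq_iff.mp hv
  simpa using (congrFun hx j).symm

end Lifting

theorem lifting_distance_general
    {F : Type*} [Field F] [DecidableEq F] {n m : ℕ}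
    (C : Set (Matrix (Fin n) (Fin m) F)) :
    (∀ x x' : Matrix (Fin n) (Fin m) F,
        sDist (lifting x) (lifting x') = 2 * (x' - x).rank) ∧
    sInf {D : ℕ | ∃ U ∈ lifting '' C, ∃ V ∈ lifting '' C, U ≠ V ∧ D = sDist U V}
      = 2 * sInf {e : ℕ | ∃ a ∈ C, ∃ b ∈ C, a ≠ b ∧ e = (b - a).rank} := by
  refine ⟨sDist_lifting, ?_⟩
  have hdist : {D : ℕ | ∃ U ∈ lifting '' C, ∃ V ∈ lifting '' C, U ≠ V ∧ D = sDist U V} =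
      (2 * ·) '' {e : ℕ | ∃ a ∈ C, ∃ b ∈ C, a ≠ b ∧ e = (b - a).rank} := by
    ext D
    simp only [Set.mem_ofPred_eq, Set.mem_image, exists_exists_and_eq_and,
      lifting_injective.ne_iff, sDist_lifting]
    grind
  rw [hdist, Nat.sInf_image_of_monotone (fun _ _ h => Nat.mul_le_mul_left 2 h) rfl]

/-- `d_S(I(x), I(x')) = 2·rank(x' − x)`, and for any rank-metric
code `C` with at least two elements the minimum subspace distance of the
lifted code `I(C)` is twice the minimum rank distance of `C`. -/
theorem lifting_distance
    {F : Type*} [Field F] [Fintype F] [DecidableEq F] {n m : ℕ}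
    (C : Set (Matrix (Fin n) (Fin m) F))
    (hC : ∃ a ∈ C, ∃ b ∈ C, a ≠ b) :
    (∀ x x' : Matrix (Fin n) (Fin m) F,
        sDist (lifting x) (lifting x') = 2 * (x' - x).rank) ∧
    sInf {D : ℕ | ∃ U ∈ lifting '' C, ∃ V ∈ lifting '' C, U ≠ V ∧ D = sDist U V}
      = 2 * sInf {e : ℕ | ∃ a ∈ C, ∃ b ∈ C, a ≠ b ∧ e = (b - a).rank} :=
  lifting_distance_general C
end

section
/- Let n, m ≥ 1 and 1 ≤ d ≤ min{n, m}, and let C ⊆ F_q^{n×m} be an MRD code with minimum rank distance d, so |C| = q^{max{n,m}·(min{n,m} − d + 1)}. Let A = A_q[n+m, 2d, n]. Then the sub-optimality of the lifted code I(C), defined as α(I(C)) = (log_q A − log_q |C|)/(log_q A), satisfies α(I(C)) < 4/((n+m)·log_2 q). -/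
section Aux

/-- Partial-product estimate: `∏_{j=1}^{K} (1 - q⁻¹^j) ≥ (1 + 2 q⁻¹^K)/4` for `q ≥ 2`. -/
lemma tail_prod_ge (q : ℝ) (hq : 2 ≤ q) (K : ℕ) :
    (1 + 2 * q⁻¹ ^ K) / 4 ≤ ∏ j ∈ Finset.range K, (1 - q⁻¹ ^ (j + 1)) := by
  have hq0 : 0 < q := by linarith
  have hu0 : 0 < q⁻¹ := inv_pos.mpr hq0
  have hu : q⁻¹ ≤ 1/2 := by
    rw [inv_le_comm₀ hq0 (by norm_num)]; linarith
  rcases Nat.eq_zero_or_pos K with h | h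
  · subst h; simp; norm_num
  · induction K with
    | zero => simp at h
    | succ K ih =>
      rcases Nat.eq_zero_or_pos K with h0 | h0
      · subst h0; simp
        nlinarith
      · have IH := ih h0
        rw [Finset.prod_range_succ]
        have ht1 : q⁻¹ ^ K ≤ q⁻¹ := by
          calc q⁻¹ ^ K ≤ q⁻¹ ^ 1 := pow_le_pow_of_le_one (le_of_lt hu0) (by linarith) h0
          _ = q⁻¹ := pow_one _
        have ht0 : 0 < q⁻¹ ^ K := pow_pos hu0 K
        have hprod0 : (0:ℝ) ≤ (1 + 2 * q⁻¹ ^ K) / 4 := by positivity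
        have hfac : 0 ≤ 1 - q⁻¹ ^ (K + 1) := by
          have : q⁻¹ ^ (K+1) ≤ 1 := pow_le_one₀ (le_of_lt hu0) (by linarith)
          linarith
        calc (1 + 2 * q⁻¹ ^ (K+1)) / 4 ≤ (1 + 2 * q⁻¹ ^ K) / 4 * (1 - q⁻¹ ^ (K + 1)) := by
              rw [pow_succ]
              nlinarith [mul_pos ht0 hu0, sq_nonneg (q⁻¹ ^ K)]
          _ ≤ (∏ j ∈ Finset.range K, (1 - q⁻¹ ^ (j + 1))) * (1 - q⁻¹ ^ (K + 1)) :=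
              mul_le_mul_of_nonneg_right IH hfac

/-- The product `∏_{i<k} (q^a - q^i)` is at least `q^{ka}/4`. -/
lemma prod_lin_bound (q a k : ℕ) (hq : 2 ≤ q) (hk : k ≤ a) :
    ((q : ℝ)) ^ (k * a) ≤ 4 * ∏ i ∈ Finset.range k, ((q:ℝ) ^ a - (q:ℝ) ^ i) := by
  have hq0 : (0:ℝ) < q := by positivity
  have hq1 : (2:ℝ) ≤ q := by exact_mod_cast hq
  have hu0 : 0 < (q:ℝ)⁻¹ := inv_pos.mpr hq0
  have hu1 : (q:ℝ)⁻¹ ≤ 1 := by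
    rw [inv_le_one_iff₀]; right; linarith
  have hfac : ∀ i ∈ Finset.range k, (q:ℝ) ^ a - (q:ℝ) ^ i
      = (q:ℝ) ^ a * (1 - (q:ℝ)⁻¹ ^ (a - i)) := by
    intro i hi
    have hia : i ≤ a := le_trans (Nat.le_of_lt (Finset.mem_range.mp hi)) hk
    have : (q:ℝ) ^ a * (q:ℝ)⁻¹ ^ (a - i) = (q:ℝ) ^ i := by
      rw [inv_pow, ← Nat.sub_add_cancel hia]
      field_simp
      rw [← pow_add]
      congr 1
      omega
    rw [mul_sub, mul_one, this]
  rw [Finset.prod_congr rfl hfac, Finset.prod_mul_distrib, Finset.prod_const, Finset.card_range]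
  have key : (1:ℝ)/4 ≤ ∏ i ∈ Finset.range k, (1 - (q:ℝ)⁻¹ ^ (a - i)) := by
    have h01 : ∀ i, 0 ≤ 1 - (q:ℝ)⁻¹ ^ (a - i) ∧ 1 - (q:ℝ)⁻¹ ^ (a - i) ≤ 1 := by
      intro i
      constructor
      · have := pow_le_one₀ (le_of_lt hu0) hu1 (n := a - i); linarith
      · have : (0:ℝ) ≤ (q:ℝ)⁻¹ ^ (a-i) := by positivity
        linarith
    have hfull : (1:ℝ)/4 ≤ ∏ i ∈ Finset.range a, (1 - (q:ℝ)⁻¹ ^ (a - i)) := by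
      have := tail_prod_ge q hq1 a
      have hre : ∏ i ∈ Finset.range a, (1 - (q:ℝ)⁻¹ ^ (a - i))
          = ∏ j ∈ Finset.range a, (1 - (q:ℝ)⁻¹ ^ (j + 1)) := by
        rw [← Finset.prod_range_reflect]
        apply Finset.prod_congr rfl
        intro j hj
        have hj' := Finset.mem_range.mp hj
        rw [show a - (a - 1 - j) = j + 1 from by omega]
      rw [hre]
      calc (1:ℝ)/4 ≤ (1 + 2 * (q:ℝ)⁻¹ ^ a)/4 := by
            have : (0:ℝ) ≤ (q:ℝ)⁻¹ ^ a := by positivity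
            linarith
        _ ≤ _ := this
    calc (1:ℝ)/4 ≤ ∏ i ∈ Finset.range a, (1 - (q:ℝ)⁻¹ ^ (a - i)) := hfull
      _ ≤ ∏ i ∈ Finset.range k, (1 - (q:ℝ)⁻¹ ^ (a - i)) := by
          have hsplit : ∏ i ∈ Finset.range a, (1 - (q:ℝ)⁻¹ ^ (a - i))
              = (∏ i ∈ Finset.range k, (1 - (q:ℝ)⁻¹ ^ (a - i)))
                * ∏ i ∈ Finset.range (a - k), (1 - (q:ℝ)⁻¹ ^ (a - (k + i))) := by
            rw [← Finset.prod_range_add, show k + (a - k) = a from by omega]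
          have h1 : ∏ i ∈ Finset.range (a - k), (1 - (q:ℝ)⁻¹ ^ (a - (k + i))) ≤ 1 :=
            Finset.prod_le_one (fun i _ => (h01 _).1) (fun i _ => (h01 _).2)
          have h2 : (0:ℝ) ≤ ∏ i ∈ Finset.range k, (1 - (q:ℝ)⁻¹ ^ (a - i)) :=
            Finset.prod_nonneg (fun i _ => (h01 _).1)
          nlinarith [hsplit]
  have hpow : ((q:ℝ) ^ a) ^ k = (q:ℝ) ^ (k * a) := by
    rw [← pow_mul, Nat.mul_comm]
  calc (q:ℝ) ^ (k*a) = ((q:ℝ)^a)^k * 1 := by rw [hpow, mul_one]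
    _ ≤ ((q:ℝ)^a)^k * (4 * ∏ i ∈ Finset.range k, (1 - (q:ℝ)⁻¹ ^ (a - i))) := by
        apply mul_le_mul_of_nonneg_left _ (by positivity)
        linarith
    _ = 4 * (((q:ℝ)^a)^k * ∏ i ∈ Finset.range k, (1 - (q:ℝ)⁻¹ ^ (a - i))) := by ring

open Module in
/-- Packing (anticode-type) bound for constant-dimension subspace codes. -/
lemma packing {F : Type*} [Field F] [Fintype F] {q M a d : ℕ} (hq : Fintype.card F = q)
    (hd1 : 1 ≤ d) (hda : d ≤ a) (haM : a ≤ M)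
    (Ω : Set (Submodule F (Fin M → F)))
    (hdim : ∀ V ∈ Ω, Module.finrank F ↥V = a)
    (hdist : ∀ U ∈ Ω, ∀ V ∈ Ω, U ≠ V → 2 * d ≤ sDist U V) :
    (Nat.card Ω : ℝ) ≤ 4 * (q:ℝ) ^ ((a - d + 1) * (M - a)) := by
  classical
  set k := a - d + 1 with hk
  have hka : k ≤ a := by omega
  have hq2 : 2 ≤ q := by rw [← hq]; exact Fintype.one_lt_card
  have hinf : ∀ U ∈ Ω, ∀ V ∈ Ω, U ≠ V → finrank F ↥(U ⊓ V) + d ≤ a := by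
    intro U hU V hV hne
    have h1 := Submodule.finrank_sup_add_finrank_inf_eq U V
    have h2 := hdist U hU V hV hne
    have h3 : finrank F ↥(U ⊓ V) ≤ finrank F ↥U :=
      Submodule.finrank_mono inf_le_left
    rw [hdim U hU, hdim V hV] at h1
    rw [hdim U hU] at h3
    simp only [sDist] at h2
    omega
  let S' := {s : Fin k → (Fin a → F) // LinearIndependent F s}
  let T := {s : Fin k → (Fin M → F) // LinearIndependent F s}
  have hVrank : ∀ V : Ω, finrank F (Fin a → F) = finrank F ↥(V : Submodule F (Fin M → F)) := by
    intro V
    rw [hdim V V.2, Module.finrank_pi, Fintype.card_fin]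
  let e : ∀ V : Ω, (Fin a → F) ≃ₗ[F] ↥(V : Submodule F (Fin M → F)) :=
    fun V => LinearEquiv.ofFinrankEq _ _ (hVrank V)
  let f : ∀ V : Ω, (Fin a → F) →ₗ[F] (Fin M → F) :=
    fun V => (V : Submodule F (Fin M → F)).subtype.comp (e V).toLinearMap
  have hfinj : ∀ V : Ω, LinearMap.ker (f V) = ⊥ := by
    intro V
    rw [LinearMap.ker_eq_bot]
    exact (Submodule.injective_subtype _).comp (e V).injective
  have hfmem : ∀ (V : Ω) (u : Fin a → F), f V u ∈ (V : Submodule F (Fin M → F)) := by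
    intro V u; exact ((e V) u).2
  let Θ : Ω × S' → T := fun p =>
    ⟨fun i => f p.1 (p.2.val i), (p.2.2).map' (f p.1) (hfinj p.1)⟩
  have hspan : ∀ p : Ω × S', Submodule.span F (Set.range (Θ p).val)
      ≤ (p.1 : Submodule F (Fin M → F)) := by
    intro p
    rw [Submodule.span_le]
    rintro - ⟨i, rfl⟩
    exact hfmem p.1 (p.2.val i)
  have hΘinj : Function.Injective Θ := by
    intro p p' hpp
    have hval : ∀ i, f p.1 (p.2.val i) = f p'.1 (p'.2.val i) := by
      intro i
      exact congrFun (congrArg Subtype.val hpp) i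
    have hVeq : p.1 = p'.1 := by
      by_contra hne
      have hne' : (p.1 : Submodule F (Fin M → F)) ≠ (p'.1 : Submodule F (Fin M → F)) := by
        simpa [Subtype.ext_iff] using hne
      have hle : Submodule.span F (Set.range (Θ p).val)
          ≤ (p.1 : Submodule F (Fin M → F)) ⊓ (p'.1 : Submodule F (Fin M → F)) := by
        refine le_inf (hspan p) ?_
        rw [hpp]
        exact hspan p'
      have hrk : finrank F ↥(Submodule.span F (Set.range (Θ p).val)) = k := by
        rw [finrank_span_eq_card (Θ p).2, Fintype.card_fin]
      have hrk2 : finrank F ↥(Submodule.span F (Set.range (Θ p).val))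
          ≤ finrank F ↥((p.1 : Submodule F (Fin M → F)) ⊓ (p'.1 : Submodule F (Fin M → F))) :=
        Submodule.finrank_mono hle
      have := hinf p.1 p.1.2 p'.1 p'.1.2 hne'
      omega
    refine Prod.ext hVeq ?_
    rcases p with ⟨V, s⟩
    rcases p' with ⟨V', s'⟩
    cases hVeq
    refine Subtype.ext (funext fun i => ?_)
    have := hval i
    have hfi : Function.Injective (f V) := by
      rw [← LinearMap.ker_eq_bot]; exact hfinj V
    exact hfi this
  have hTle : Nat.card T ≤ q ^ (k * M) := by
    have h1 : Nat.card T ≤ Nat.card (Fin k → Fin M → F) := Finite.card_subtype_le _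
    have h2 : Nat.card (Fin k → Fin M → F) = q ^ (k * M) := by
      rw [Nat.card_eq_fintype_card]
      simp [Fintype.card_fun, Fintype.card_pi, hq, ← pow_mul, Nat.mul_comm]
    omega
  have hS' : Nat.card S' = ∏ i : Fin k, (q ^ a - q ^ i.val) := by
    have := card_linearIndependent (K := F) (V := Fin a → F)
      (k := k) (by rw [Module.finrank_pi, Fintype.card_fin]; exact hka)
    rw [this, Module.finrank_pi, Fintype.card_fin, hq]
  have hcard : Nat.card Ω * ∏ i : Fin k, (q ^ a - q ^ i.val) ≤ q ^ (k * M) := by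
    calc Nat.card Ω * ∏ i : Fin k, (q ^ a - q ^ i.val)
        = Nat.card (Ω × S') := by rw [Nat.card_prod, hS']
      _ ≤ Nat.card T := Nat.card_le_card_of_injective Θ hΘinj
      _ ≤ q ^ (k * M) := hTle
  have hcast : ((∏ i : Fin k, (q ^ a - q ^ i.val) : ℕ) : ℝ)
      = ∏ i ∈ Finset.range k, ((q:ℝ) ^ a - (q:ℝ) ^ i) := by
    rw [Fin.prod_univ_eq_prod_range (fun i => (q ^ a - q ^ i : ℕ)) k, Nat.cast_prod]
    refine Finset.prod_congr rfl fun i hi => ?_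
    have : q ^ i ≤ q ^ a :=
      Nat.pow_le_pow_right (by omega) (le_trans (Nat.le_of_lt (Finset.mem_range.mp hi)) hka)
    push_cast [Nat.cast_sub this]
    ring
  have hR : (Nat.card Ω : ℝ) * ((q:ℝ) ^ (k * a)) ≤ 4 * (q:ℝ) ^ (k * M) := by
    have h1 : (Nat.card Ω : ℝ) * ((∏ i : Fin k, (q ^ a - q ^ i.val) : ℕ) : ℝ)
        ≤ (q:ℝ) ^ (k * M) := by
      exact_mod_cast hcard
    have h2 := prod_lin_bound q a k hq2 hka
    rw [hcast] at h1
    have hΩ0 : (0:ℝ) ≤ (Nat.card Ω : ℝ) := Nat.cast_nonneg _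
    nlinarith
  have hexp : k * M = k * (M - a) + k * a := by
    have := Nat.mul_le_mul_left k haM
    rw [Nat.mul_sub]
    omega
  have hpos : (0:ℝ) < (q:ℝ) ^ (k * a) := by positivity
  have hfin : (Nat.card Ω : ℝ) * ((q:ℝ) ^ (k * a))
      ≤ (4 * (q:ℝ) ^ (k * (M - a))) * ((q:ℝ) ^ (k * a)) := by
    rw [mul_assoc, ← pow_add, ← hexp]
    exact hR
  exact le_of_mul_le_mul_right hfin hpos

open Module in
/-- Orthogonal-complement (dual annihilator) duality for constant-dimension codes. -/
lemma dualize {F : Type*} [Field F] [Fintype F] {M a d : ℕ}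
    (hd1 : 1 ≤ d)
    (Ω : Set (Submodule F (Fin M → F)))
    (hdim : ∀ V ∈ Ω, finrank F ↥V = a)
    (hdist : ∀ U ∈ Ω, ∀ V ∈ Ω, U ≠ V → 2 * d ≤ sDist U V) :
    ∃ Ω' : Set (Submodule F (Fin M → F)),
      (∀ V ∈ Ω', finrank F ↥V = M - a) ∧
      (∀ U ∈ Ω', ∀ V ∈ Ω', U ≠ V → 2 * d ≤ sDist U V) ∧
      Nat.card Ω' = Nat.card Ω := by
  classical
  let ed : Module.Dual F (Fin M → F) ≃ₗ[F] (Fin M → F) :=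
    (Pi.basisFun F (Fin M)).toDualEquiv.symm
  let ψ : Submodule F (Fin M → F) → Submodule F (Fin M → F) :=
    fun V => (V.dualAnnihilator).map (ed : Module.Dual F (Fin M → F) →ₗ[F] (Fin M → F))
  have hMrank : finrank F (Fin M → F) = M := by
    rw [Module.finrank_pi, Fintype.card_fin]
  have hfrk : ∀ V : Submodule F (Fin M → F), finrank F ↥(ψ V) = M - finrank F ↥V := by
    intro V
    have h1 : finrank F ↥(ψ V) = finrank F ↥V.dualAnnihilator :=
      LinearEquiv.finrank_map_eq ed V.dualAnnihilator
    have h2 : finrank F ↥V.dualAnnihilator = finrank F ((Fin M → F) ⧸ V) :=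
      (Subspace.quotEquivAnnihilator V).symm.finrank_eq
    have h3 := V.finrank_quotient_add_finrank
    rw [hMrank] at h3
    omega
  have hsup : ∀ U V : Submodule F (Fin M → F), ψ U ⊔ ψ V = ψ (U ⊓ V) := by
    intro U V
    show _ = ((U ⊓ V).dualAnnihilator).map _
    rw [Subspace.dualAnnihilator_inf_eq, Submodule.map_sup]
  have hinf : ∀ U V : Submodule F (Fin M → F), ψ U ⊓ ψ V = ψ (U ⊔ V) := by
    intro U V
    show _ = ((U ⊔ V).dualAnnihilator).map _
    rw [Submodule.dualAnnihilator_sup_eq]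
    exact (Submodule.map_inf _ ed.injective).symm
  have hsdist : ∀ U V : Submodule F (Fin M → F), sDist (ψ U) (ψ V) = sDist U V := by
    intro U V
    have hUV : finrank F ↥(U ⊓ V) ≤ finrank F ↥(U ⊔ V) :=
      Submodule.finrank_mono (le_trans inf_le_left le_sup_left)
    have hM : finrank F ↥(U ⊔ V) ≤ M := by
      have := (U ⊔ V).finrank_le
      rwa [hMrank] at this
    unfold sDist
    rw [hsup, hinf, hfrk, hfrk]
    omega
  refine ⟨ψ '' Ω, ?_, ?_, ?_⟩
  · rintro - ⟨V, hV, rfl⟩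
    rw [hfrk, hdim V hV]
  · rintro - ⟨U, hU, rfl⟩ - ⟨V, hV, rfl⟩ hne
    have hUV : U ≠ V := by rintro rfl; exact hne rfl
    rw [hsdist]
    exact hdist U hU V hV hUV
  · apply Nat.card_image_of_injOn
    intro U hU V hV hUV
    by_contra hne
    have := hdist U hU V hV hne
    have h0 : sDist (ψ U) (ψ V) = sDist U V := hsdist U V
    rw [hUV] at h0
    have : sDist (ψ V) (ψ V) = 0 := by
      unfold sDist
      rw [sup_idem, inf_idem, Nat.sub_self]
    omega

open Module Matrix in
/-- The lifting of a rank-metric code is a constant-dimension code of the same size. -/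
lemma lifted {F : Type*} [Field F] [Fintype F] {n m d : ℕ} (hd1 : 1 ≤ d)
    (C : Set (Matrix (Fin n) (Fin m) F))
    (hCdist : ∀ x ∈ C, ∀ y ∈ C, x ≠ y → d ≤ (y - x).rank) :
    ∃ Ω : Set (Submodule F (Fin (n + m) → F)),
      (∀ V ∈ Ω, finrank F ↥V = n) ∧
      (∀ U ∈ Ω, ∀ V ∈ Ω, U ≠ V → 2 * d ≤ sDist U V) ∧
      Nat.card Ω = Nat.card C := by
  classical
  let E : ((Fin n → F) × (Fin m → F)) ≃ₗ[F] (Fin (n + m) → F) :=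
    (LinearEquiv.sumArrowLequivProdArrow (Fin n) (Fin m) F F).symm.trans
      (LinearEquiv.funCongrLeft F F finSumFinEquiv).symm
  let π1 : (Fin (n + m) → F) →ₗ[F] (Fin n → F) :=
    (LinearMap.fst F (Fin n → F) (Fin m → F)).comp
      (E.symm : (Fin (n + m) → F) →ₗ[F] ((Fin n → F) × (Fin m → F)))
  let π2 : (Fin (n + m) → F) →ₗ[F] (Fin m → F) :=
    (LinearMap.snd F (Fin n → F) (Fin m → F)).comp
      (E.symm : (Fin (n + m) → F) →ₗ[F] ((Fin n → F) × (Fin m → F)))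
  let f : Matrix (Fin n) (Fin m) F → ((Fin n → F) →ₗ[F] (Fin (n + m) → F)) :=
    fun x => (E : ((Fin n → F) × (Fin m → F)) →ₗ[F] (Fin (n + m) → F)).comp
      (LinearMap.prod LinearMap.id x.vecMulLinear)
  have hπ1 : ∀ x v, π1 (f x v) = v := by
    intro x v
    show (E.symm (E (v, v ᵥ* x))).1 = v
    rw [E.symm_apply_apply]
  have hπ2 : ∀ x v, π2 (f x v) = v ᵥ* x := by
    intro x v
    show (E.symm (E (v, v ᵥ* x))).2 = v ᵥ* x
    rw [E.symm_apply_apply]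
  have hfinj : ∀ x, Function.Injective (f x) := by
    intro x u v huv
    have : π1 (f x u) = π1 (f x v) := by rw [huv]
    rwa [hπ1, hπ1] at this
  let I : Matrix (Fin n) (Fin m) F → Submodule F (Fin (n + m) → F) :=
    fun x => LinearMap.range (f x)
  have hrank : ∀ x, finrank F ↥(I x) = n := by
    intro x
    rw [LinearMap.finrank_range_of_inj (hfinj x), Module.finrank_pi, Fintype.card_fin]
  have hIinj : Function.Injective I := by
    intro x y hxy
    have hv : ∀ v : Fin n → F, v ᵥ* x = v ᵥ* y := by
      intro v
      have hmem : f x v ∈ I y := by rw [← hxy]; exact ⟨v, rfl⟩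
      obtain ⟨w, hw⟩ := hmem
      have hw1 : w = v := by
        have := congrArg π1 hw
        rwa [hπ1, hπ1] at this
      have := congrArg π2 hw
      rw [hπ2, hπ2, hw1] at this
      exact this.symm ▸ (by rw [← this])
    ext i j
    have := hv (Pi.single i 1)
    rw [Matrix.single_one_vecMul, Matrix.single_one_vecMul] at this
    exact congrFun this j
  have hdist : ∀ x ∈ C, ∀ y ∈ C, x ≠ y → 2 * d ≤ sDist (I x) (I y) := by
    intro x hx y hy hne
    have hrk := hCdist x hx y hy hne
    have hker : I x ⊓ I y ≤ Submodule.map (f x) (LinearMap.ker (y - x).vecMulLinear) := by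
      rintro w ⟨⟨u, rfl⟩, ⟨v, hv⟩⟩
      have hv1 : v = u := by
        have := congrArg π1 hv
        rwa [hπ1, hπ1] at this
      have hv2 : u ᵥ* y = u ᵥ* x := by
        have := congrArg π2 hv
        rwa [hπ2, hπ2, hv1] at this
      refine ⟨u, ?_, rfl⟩
      show u ∈ LinearMap.ker (y - x).vecMulLinear
      rw [LinearMap.mem_ker, Matrix.vecMulLinear_apply, Matrix.vecMul_sub, hv2, sub_self]
    have hkerrank : finrank F ↥(LinearMap.ker (y - x).vecMulLinear) + (y - x).rank = n := by
      have h1 := LinearMap.finrank_range_add_finrank_ker (y - x).vecMulLinear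
      have h2 : LinearMap.range (y - x).vecMulLinear = LinearMap.range ((y - x)ᵀ).mulVecLin := by
        rw [Matrix.mulVecLin_transpose]
      have h3 : (y - x)ᵀ.rank = (y - x).rank := Matrix.rank_transpose _
      rw [Module.finrank_pi, Fintype.card_fin] at h1
      rw [← h3]
      unfold Matrix.rank
      rw [← h2]
      omega
    have hinfle : finrank F ↥(I x ⊓ I y)
        ≤ finrank F ↥(LinearMap.ker (y - x).vecMulLinear) := by
      calc finrank F ↥(I x ⊓ I y)
          ≤ finrank F ↥(Submodule.map (f x) (LinearMap.ker (y - x).vecMulLinear)) :=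
            Submodule.finrank_mono hker
        _ ≤ _ := Submodule.finrank_map_le _ _
    have hsum := Submodule.finrank_sup_add_finrank_inf_eq (I x) (I y)
    rw [hrank x, hrank y] at hsum
    unfold sDist
    omega
  refine ⟨I '' C, ?_, ?_, ?_⟩
  · rintro - ⟨x, hx, rfl⟩
    exact hrank x
  · rintro - ⟨x, hx, rfl⟩ - ⟨y, hy, rfl⟩ hne
    exact hdist x hx y hy (fun h => hne (by rw [h]))
  · exact Nat.card_image_of_injOn hIinj.injOn

end Aux

/-- if `C ⊆ F_q^{n×m}` is an MRD code with minimum rank distance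
`d` (so `|C| = q^{max{n,m}·(min{n,m}−d+1)}`) and
`A = A_q[n+m, 2d, n]` is the maximum cardinality of a constant-dimension code
of `n`-dimensional subspaces of `F_q^{n+m}` with minimum subspace distance at
least `2d`, then the sub-optimality
`α(I(C)) = (log_q A − log_q |C|)/(log_q A)` satisfies
`α(I(C)) < 4/((n+m)·log_2 q)`. -/
theorem lifted_MRD_suboptimality
    {F : Type*} [Field F] [Fintype F] {q n m d : ℕ}
    (hq : Fintype.card F = q)
    (hn : 1 ≤ n) (hm : 1 ≤ m) (hd1 : 1 ≤ d) (hd2 : d ≤ min n m)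
    (C : Set (Matrix (Fin n) (Fin m) F))
    (hCdist : ∀ x ∈ C, ∀ y ∈ C, x ≠ y → d ≤ (y - x).rank)
    (hCcard : Nat.card C = q ^ (max n m * (min n m - d + 1)))
    (A : ℕ)
    (hA : IsGreatest {k : ℕ |
        ∃ Ω : Set (Submodule F (Fin (n + m) → F)),
          (∀ V ∈ Ω, Module.finrank F ↥V = n) ∧
          (∀ U ∈ Ω, ∀ V ∈ Ω, U ≠ V → 2 * d ≤ sDist U V) ∧
          Nat.card Ω = k} A) :
    (Real.logb q A - Real.logb q (Nat.card C)) / Real.logb q A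
      < 4 / ((n + m) * Real.logb 2 q) := by
  classical
  set e := max n m * (min n m - d + 1) with he
  have hq2 : 2 ≤ q := by rw [← hq]; exact Fintype.one_lt_card
  have he1 : max n m ≤ e := Nat.le_mul_of_pos_right _ (by omega)
  have hesum : n + m ≤ 2 * e := by
    have : n ≤ max n m := le_max_left n m
    have : m ≤ max n m := le_max_right n m
    omega
  -- lower bound  q^e ≤ A
  have hlow : q ^ e ≤ A := by
    obtain ⟨Ω₀, h1, h2, h3⟩ := lifted hd1 C hCdist
    exact hA.2 ⟨Ω₀, h1, h2, by rw [h3, hCcard]⟩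
  -- upper bound  A ≤ 4 q^e
  have hup : (A : ℝ) ≤ 4 * (q : ℝ) ^ e := by
    obtain ⟨Ω, hΩdim, hΩdist, hΩcard⟩ := hA.1
    rcases le_or_gt n m with hnm | hnm
    · have := packing hq hd1 (le_trans hd2 (min_le_left n m)) (by omega) Ω hΩdim hΩdist
      rw [hΩcard] at this
      have hexp : (n - d + 1) * (n + m - n) = e := by
        rw [he, Nat.max_eq_right hnm, Nat.min_eq_left hnm,
          show n + m - n = m from by omega, Nat.mul_comm]
      rwa [hexp] at this
    · obtain ⟨Ω', h1, h2, h3⟩ := dualize hd1 Ω hΩdim hΩdist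
      have h1' : ∀ V ∈ Ω', Module.finrank F ↥V = m := by
        intro V hV
        rw [h1 V hV]
        omega
      have := packing hq hd1 (le_trans hd2 (min_le_right n m)) (by omega) Ω' h1' h2
      rw [h3, hΩcard] at this
      have hexp : (m - d + 1) * (n + m - m) = e := by
        rw [he, Nat.max_eq_left (le_of_lt hnm), Nat.min_eq_right (le_of_lt hnm),
          show n + m - m = n from by omega, Nat.mul_comm]
      rwa [hexp] at this
  -- real arithmetic
  have hq1R : (1 : ℝ) < (q : ℝ) := by exact_mod_cast (by omega : 1 < q)
  have hqe_pos : (0 : ℝ) < (q : ℝ) ^ e := by positivity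
  have hApos : (0 : ℝ) < (A : ℝ) := by
    have : (q:ℝ) ^ e ≤ (A:ℝ) := by exact_mod_cast hlow
    linarith
  set L := Real.logb q A with hL
  set c := Real.logb q 4 with hc
  have hcpos : 0 < c := Real.logb_pos hq1R (by norm_num)
  have hlogC : Real.logb q (Nat.card C) = e := by
    rw [hCcard]
    push_cast
    rw [Real.logb_pow, Real.logb_self_eq_one hq1R]
    ring
  have hLge : (e : ℝ) ≤ L := by
    have h1 : Real.logb q ((q:ℝ) ^ e) ≤ Real.logb q A :=
      Real.logb_le_logb_of_le hq1R hqe_pos (by exact_mod_cast hlow)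
    rwa [Real.logb_pow, Real.logb_self_eq_one hq1R,
      mul_one] at h1
  have hLle : L ≤ (e : ℝ) + c := by
    have h1 : Real.logb q (A : ℝ) ≤ Real.logb q (4 * (q:ℝ) ^ e) :=
      Real.logb_le_logb_of_le hq1R hApos hup
    rwa [Real.logb_mul (by norm_num) (by positivity), Real.logb_pow,
      Real.logb_self_eq_one hq1R, mul_one,
      add_comm] at h1
  have hepos : (1 : ℝ) ≤ (e : ℝ) := by
    have : 1 ≤ e := by omega
    exact_mod_cast this
  have hLpos : 0 < L := by linarith
  -- rewrite the RHS
  have hlog2 : (0:ℝ) < Real.log 2 := Real.log_pos (by norm_num)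
  have hlogq : (0:ℝ) < Real.log q := Real.log_pos hq1R
  have hnm2 : (2:ℝ) ≤ (n:ℝ) + (m:ℝ) := by
    have : 2 ≤ n + m := by omega
    exact_mod_cast this
  have hRHS : 4 / (((n:ℝ) + m) * Real.logb 2 q) = 2 * c / ((n:ℝ) + m) := by
    rw [hc, Real.logb, Real.logb]
    have hlog4 : Real.log 4 = 2 * Real.log 2 := by
      rw [show (4:ℝ) = 2 ^ 2 by norm_num, Real.log_pow]
      push_cast
      ring
    rw [hlog4]
    field_simp
    ring
  rw [hlogC, hRHS]
  have hstep1 : (L - (e:ℝ)) / L ≤ c / ((e:ℝ) + c) := by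
    rw [div_le_div_iff₀ hLpos (by linarith)]
    nlinarith
  have hstep2 : c / ((e:ℝ) + c) < 2 * c / ((n:ℝ) + m) := by
    rw [div_lt_div_iff₀ (by linarith) (by linarith)]
    have h2e : (n:ℝ) + m ≤ 2 * (e:ℝ) := by
      have := hesum
      push_cast
      exact_mod_cast (by exact_mod_cast this : ((n + m : ℕ) : ℝ) ≤ ((2 * e : ℕ) : ℝ))
    nlinarith
  linarith
end

section
/- Let Y ∈ F_q^{N×(n+m)} with rank Y = N, and write Y = [Â | y] with Â ∈ F_q^{N×n} and y ∈ F_q^{N×m}. Set μ = n − rank Â and δ = N − rank Â. Then there exist a matrix r ∈ F_q^{n×m}, a matrix L̂ ∈ F_q^{n×μ}, a matrix Ê ∈ F_q^{δ×m}, and a subset U ⊆ {1,…,n} such that: (i) |U| = μ; (ii) I_U^T r = 0; (iii) I_U^T L̂ = −I_{μ×μ}; (iv) rank Ê = δ; and (v) the row space of the (n+δ)×(n+m) block matrix [[I_n + L̂ I_U^T , r],[0 , Ê]] equals the row space of Y. -/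
open Matrix

/-- `I_U`: the `n × μ` matrix whose columns are the columns of the `n × n`
identity matrix indexed by the set `U` (in increasing order). -/
def unitColumns (F : Type*) [Field F] {n μ : ℕ}
    (U : Finset (Fin n)) (hU : U.card = μ) : Matrix (Fin n) (Fin μ) F :=
  Matrix.of fun i k => if i = U.orderEmbOfFin hU k then 1 else 0

/-!
Let `V` be the row space of `Y` and `π` the restriction to the first `n` coordinates, so that
`π V` is the row space of `Â`. Some set `U` of standard basis vectors spans a complement of `π V`,
and `|U| = n - rank Â = μ`. Projecting the standard basis onto `π V` along this complement gives
a spanning family of `π V` in systematic form: zero on the rows indexed by `U`, identity on the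
columns outside `U`. Lifting these rows to `V` gives the top block `[I + L I_Uᵀ | r]`, and any
such lift together with a basis `[0 | Ê]` of `V ∩ ker π`, of dimension `N - rank Â = δ`,
spans `V`.
-/

section RowSpace

variable {K l m n : Type*} [Field K]

theorem rank_eq_finrank_rowSpace [Fintype l] [Fintype n] (A : Matrix l n K) :
    A.rank = Module.finrank K (rowSpace A) :=
  A.rank_eq_finrank_span_row

theorem rowSpace_fromRows (A : Matrix l n K) (B : Matrix m n K) :
    rowSpace (fromRows A B) = rowSpace A ⊔ rowSpace B := by
  rw [rowSpace, rowSpace, rowSpace, ← Submodule.span_union, ← Set.Sum.elim_range]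
  rfl

theorem map_rowSpace_fromCols_inl (A : Matrix l m K) (B : Matrix l n K) :
    (rowSpace (fromCols A B)).map (LinearMap.funLeft K K Sum.inl) = rowSpace A := by
  rw [rowSpace, Submodule.map_span, ← Set.range_comp]
  rfl

theorem exists_fromCols_mem_of_mem_map {V : Submodule K (m ⊕ n → K)} (A : Matrix l m K)
    (hA : ∀ i, A i ∈ V.map (LinearMap.funLeft K K Sum.inl)) :
    ∃ B : Matrix l n K, (∀ i, fromCols A B i ∈ V) ∧ ∀ i, A i = 0 → B i = 0 := by
  classical
  choose x hxV hx using fun i => Submodule.mem_map.mp (hA i)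
  refine ⟨fun i => if A i = 0 then 0 else x i ∘ Sum.inr, fun i => ?_, fun i hi => if_pos hi⟩
  by_cases hi : A i = 0
  · convert V.zero_mem
    ext (j | j) <;> simp [fromCols, hi]
  · convert hxV i
    ext (j | j)
    · exact congrFun (hx i) j |>.symm
    · simp [fromCols, hi]

end RowSpace

section Kernel

variable {K M N : Type*} [Field K] [AddCommGroup M] [Module K M] [AddCommGroup N] [Module K N]

theorem finrank_inf_ker_add_finrank_map [FiniteDimensional K M] (f : M →ₗ[K] N)
    (V : Submodule K M) :
    Module.finrank K ↥(V ⊓ LinearMap.ker f) + Module.finrank K (V.map f) = Module.finrank K V := by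
  have h := (f.domRestrict V).finrank_range_add_finrank_ker
  rw [LinearMap.range_domRestrict, LinearMap.ker_domRestrict,
    ← Submodule.finrank_map_subtype_eq, Submodule.map_comap_subtype] at h
  omega

theorem sup_inf_ker_eq_of_map_eq {f : M →ₗ[K] N} {S V : Submodule K M} (hSV : S ≤ V)
    (h : S.map f = V.map f) : S ⊔ V ⊓ LinearMap.ker f = V := by
  have hV : V ≤ S ⊔ LinearMap.ker f := (LinearMap.map_le_map_iff f).mp h.ge
  rw [inf_comm, ← sup_inf_assoc_of_le _ hSV, inf_eq_right.mpr hV]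

end Kernel

section KernelRows

variable {K m n : Type*} [Field K] [Fintype m] [Fintype n]

theorem exists_rank_eq_rowSpace_fromCols_zero_eq {W : Submodule K (m ⊕ n → K)} {d : ℕ}
    (hW : W ≤ LinearMap.ker (LinearMap.funLeft K K Sum.inl)) (hd : Module.finrank K W = d) :
    ∃ E : Matrix (Fin d) n K, E.rank = d ∧ rowSpace (fromCols (0 : Matrix (Fin d) m K) E) = W := by
  let b := Module.finBasisOfFinrankEq K W hd
  have hb : Submodule.span K (Set.range (W.subtype ∘ b)) = W := by
    rw [Set.range_comp, ← Submodule.map_span, b.span_eq, Submodule.map_subtype_top]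
  have hb_inl : ∀ k, LinearMap.funLeft K K Sum.inl (b k : m ⊕ n → K) = 0 :=
    fun k => hW (b k).2
  refine ⟨of fun k => LinearMap.funLeft K K Sum.inr (b k : m ⊕ n → K), ?_, ?_⟩
  · have hdisj : Disjoint W (LinearMap.ker (LinearMap.funLeft K K (Sum.inr : n → m ⊕ n))) := by
      refine Submodule.disjoint_def.mpr fun x hxW hx => funext fun j => ?_
      cases j with
      | inl j => exact congrFun (hW hxW) j
      | inr j => exact congrFun hx j
    have hli := b.linearIndependent.map' W.subtype W.ker_subtype |>.map (hb.symm ▸ hdisj)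
    exact hli.rank_matrix.trans (Fintype.card_fin d)
  · refine Eq.trans ?_ hb
    rw [rowSpace]
    congr 2
    funext k
    ext (j | j)
    · exact (congrFun (hb_inl k) j).symm
    · rfl

end KernelRows

section Complement

variable {K ι : Type*} [Field K] [Fintype ι] [DecidableEq ι]

theorem Submodule.exists_finset_isCompl_span_basisFun (P : Submodule K (ι → K)) :
    ∃ U : Finset ι, U.card + Module.finrank K P = Fintype.card ι ∧
      IsCompl P (Submodule.span K (Pi.basisFun K ι '' U)) := by
  set e := Pi.basisFun K ι
  -- `U` will index a basis of `(ι → K) ⧸ P` made of images of standard basis vectors.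
  obtain ⟨κ, a, ha, hspan, hli⟩ := exists_linearIndependent' K (P.mkQ ∘ e)
  have : Fintype κ := Fintype.ofInjective a ha
  have hspan_top : Submodule.span K (Set.range (P.mkQ ∘ e ∘ a)) = ⊤ := by
    rw [← Function.comp_assoc, hspan, Set.range_comp, ← Submodule.map_span, e.span_eq,
      Submodule.map_top, Submodule.range_mkQ]
  have hU : e '' (Finset.univ.image a : Finset ι) = Set.range (e ∘ a) := by
    simp [Set.range_comp]
  refine ⟨Finset.univ.image a, ?_, ?_⟩
  · have hq := finrank_span_eq_card hli
    rw [← Function.comp_assoc] at hspan_top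
    rw [hspan_top, finrank_top] at hq
    rw [Finset.card_image_of_injective _ ha, Finset.card_univ, ← hq,
      Submodule.finrank_quotient_add_finrank, Module.finrank_fintype_fun_eq_card]
  · rw [hU]
    refine ⟨(Submodule.range_ker_disjoint (f := P.mkQ) hli).symm.mono_left ?_, ?_⟩
    · rw [Submodule.ker_mkQ]
    · rw [codisjoint_iff, ← Submodule.map_mkQ_eq_top, Submodule.map_span, ← Set.range_comp]
      exact hspan_top

theorem exists_rowSpace_eq_of_isCompl_span_basisFun {P : Submodule K (ι → K)} {U : Finset ι}
    (h : IsCompl P (Submodule.span K (Pi.basisFun K ι '' U))) :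
    ∃ A : Matrix ι ι K, rowSpace A = P ∧ (∀ i ∈ U, A i = 0) ∧
      ∀ i, ∀ j ∉ U, A i j = (1 : Matrix ι ι K) i j := by
  set e := Pi.basisFun K ι
  have hvanish : ∀ j ∉ U, Submodule.span K (e '' U) ≤ LinearMap.ker (LinearMap.proj j) := by
    intro j hj
    rw [Submodule.span_le]
    rintro _ ⟨u, hu, rfl⟩
    simp [e, show j ≠ u from fun h => hj (h ▸ hu)]
  refine ⟨of fun i => P.projection _ h (e i), ?_, fun i hi => ?_, fun i j hj => ?_⟩
  · refine Eq.trans ?_ (Submodule.range_projection h)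
    rw [rowSpace, LinearMap.range_eq_map, ← e.span_eq,
      Submodule.map_span, ← Set.range_comp]
    rfl
  · exact Submodule.projection_apply_of_mem_right h (Submodule.subset_span ⟨i, hi, rfl⟩)
  · have := LinearMap.mem_ker.mp (hvanish j hj (Submodule.sub_projection_mem h (e i)))
    rw [LinearMap.proj_apply, Pi.sub_apply, sub_eq_zero] at this
    rw [of_apply, ← this]
    simp [e, Matrix.one_apply, Pi.single_apply, eq_comm]

end Complement

section UnitColumns

variable {F : Type*} [Field F] {n μ : ℕ} (U : Finset (Fin n)) (hU : U.card = μ)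

theorem unitColumns_transpose_mul_apply {α : Type*} (M : Matrix (Fin n) α F) (k : Fin μ) (j : α) :
    ((unitColumns F U hU)ᵀ * M) k j = M (U.orderEmbOfFin hU k) j := by
  simp [Matrix.mul_apply, unitColumns]

theorem unitColumns_transpose_mul_eq_zero {α : Type*} {M : Matrix (Fin n) α F}
    (hM : ∀ i ∈ U, M i = 0) : (unitColumns F U hU)ᵀ * M = 0 := by
  ext k j
  rw [unitColumns_transpose_mul_apply, hM _ (U.orderEmbOfFin_mem hU k)]
  rfl

theorem unitColumns_transpose_mul_self : (unitColumns F U hU)ᵀ * unitColumns F U hU = 1 := by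
  ext k k'
  rw [unitColumns_transpose_mul_apply]
  simp [unitColumns, Matrix.one_apply]

theorem unitColumns_mul_transpose :
    unitColumns F U hU * (unitColumns F U hU)ᵀ = diagonal fun j => if j ∈ U then 1 else 0 := by
  ext i j
  rw [Matrix.mul_apply, diagonal_apply]
  simp only [transpose_apply, unitColumns, of_apply, mul_ite, mul_one, mul_zero]
  refine (Finset.sum_image (f := fun x => if j = x then if i = x then (1 : F) else 0 else 0)
    fun a _ b _ h => (U.orderEmbOfFin hU).injective h).symm.trans ?_
  rw [Finset.image_orderEmbOfFin_univ, Finset.sum_ite_eq]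
  split_ifs <;> simp_all

theorem one_add_sub_one_mul_unitColumns_mul_transpose {A : Matrix (Fin n) (Fin n) F}
    (hA : ∀ i, ∀ j ∉ U, A i j = (1 : Matrix (Fin n) (Fin n) F) i j) :
    1 + (A - 1) * unitColumns F U hU * (unitColumns F U hU)ᵀ = A := by
  ext i j
  rw [Matrix.mul_assoc, unitColumns_mul_transpose, Matrix.add_apply, mul_diagonal]
  by_cases hj : j ∈ U
  · simp [hj]
  · simp [hj, hA i j hj]

end UnitColumns

theorem reduction_existence_general
    {F : Type*} [Field F] {N n m : ℕ} {μ δ : ℕ}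
    (Y : Matrix (Fin N) (Fin n ⊕ Fin m) F) (hrank : Y.rank = N)
    (Ahat : Matrix (Fin N) (Fin n) F) (y : Matrix (Fin N) (Fin m) F)
    (hY : Y = Matrix.fromCols Ahat y)
    (hμ : μ = n - Ahat.rank) (hδ : δ = N - Ahat.rank) :
    ∃ (r : Matrix (Fin n) (Fin m) F) (L : Matrix (Fin n) (Fin μ) F)
      (E : Matrix (Fin δ) (Fin m) F) (U : Finset (Fin n)) (hU : U.card = μ),
      (unitColumns F U hU)ᵀ * r = 0 ∧
      (unitColumns F U hU)ᵀ * L = -1 ∧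
      E.rank = δ ∧
      rowSpace (Matrix.fromBlocks
          (1 + L * (unitColumns F U hU)ᵀ) r 0 E) = rowSpace Y := by
  set π := LinearMap.funLeft F F (Sum.inl : Fin n → Fin n ⊕ Fin m)
  have hP : (rowSpace Y).map π = rowSpace Ahat := hY ▸ map_rowSpace_fromCols_inl Ahat y
  obtain ⟨U, hUcard, hcompl⟩ := (rowSpace Ahat).exists_finset_isCompl_span_basisFun
  have hU : U.card = μ := by
    rw [Fintype.card_fin, ← rank_eq_finrank_rowSpace] at hUcard
    omega
  obtain ⟨A, hAP, hAU, hA1⟩ := exists_rowSpace_eq_of_isCompl_span_basisFun hcompl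
  obtain ⟨r, hrY, hr0⟩ := exists_fromCols_mem_of_mem_map (V := rowSpace Y) A fun i =>
    hP ▸ hAP ▸ Submodule.subset_span ⟨i, rfl⟩
  have hW : Module.finrank F ↥(rowSpace Y ⊓ LinearMap.ker π) = δ := by
    have h := finrank_inf_ker_add_finrank_map π (rowSpace Y)
    rw [hP, ← rank_eq_finrank_rowSpace, ← rank_eq_finrank_rowSpace, hrank] at h
    omega
  obtain ⟨E, hE, hEW⟩ := exists_rank_eq_rowSpace_fromCols_zero_eq inf_le_right hW
  refine ⟨r, (A - 1) * unitColumns F U hU, E, U, hU,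
    unitColumns_transpose_mul_eq_zero U hU fun i hi => hr0 i (hAU i hi), ?_, hE, ?_⟩
  · rw [← Matrix.mul_assoc, Matrix.mul_sub, unitColumns_transpose_mul_eq_zero U hU hAU,
      Matrix.mul_one, zero_sub, Matrix.neg_mul, unitColumns_transpose_mul_self]
  · rw [one_add_sub_one_mul_unitColumns_mul_transpose U hU hA1,
      ← fromRows_fromCols_eq_fromBlocks, rowSpace_fromRows, hEW]
    refine sup_inf_ker_eq_of_map_eq (Submodule.span_le.mpr ?_) ?_
    · rintro _ ⟨i, rfl⟩
      exact hrY i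
    · rw [map_rowSpace_fromCols_inl, hAP, hP]

/-- existence of a reduction of a full-rank received matrix
`Y = [Ahat | y]`. -/
theorem reduction_existence
    {F : Type*} [Field F] [Fintype F] {N n m : ℕ} {μ δ : ℕ}
    (Y : Matrix (Fin N) (Fin n ⊕ Fin m) F) (hrank : Y.rank = N)
    (Ahat : Matrix (Fin N) (Fin n) F) (y : Matrix (Fin N) (Fin m) F)
    (hY : Y = Matrix.fromCols Ahat y)
    (hμ : μ = n - Ahat.rank) (hδ : δ = N - Ahat.rank) :
    ∃ (r : Matrix (Fin n) (Fin m) F) (L : Matrix (Fin n) (Fin μ) F)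
      (E : Matrix (Fin δ) (Fin m) F) (U : Finset (Fin n)) (hU : U.card = μ),
      (unitColumns F U hU)ᵀ * r = 0 ∧
      (unitColumns F U hU)ᵀ * L = -1 ∧
      E.rank = δ ∧
      rowSpace (Matrix.fromBlocks
          (1 + L * (unitColumns F U hU)ᵀ) r 0 E) = rowSpace Y :=
  reduction_existence_general Y hrank Ahat y hY hμ hδ
end

section
/- Let r ∈ F_q^{n×m}, L̂ ∈ F_q^{n×μ}, Ê ∈ F_q^{δ×m} and U ⊆ {1,…,n} satisfy: |U| = μ, I_U^T r = 0, I_U^T L̂ = −I_{μ×μ}, and rank Ê = δ. Let S ⊆ {1,…,n}, T ∈ F_q^{μ×μ} and R ∈ F_q^{δ×δ} be such that the tuple (r, L̂T, RÊ) together with the set S also satisfies these four conditions (i.e., |S| = μ, I_S^T r = 0, I_S^T(L̂T) = −I_{μ×μ}, rank(RÊ) = δ). Then the row space of the block matrix [[I_n + L̂T·I_S^T , r],[0 , RÊ]] equals the row space of [[I_n + L̂·I_U^T , r],[0 , Ê]]. -/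
open Matrix

/-!
Put `A = 1 + (L T) I_Sᵀ` and `B = 1 + L I_Uᵀ`. The conditions `I_Sᵀ L T = -1` and
`I_Uᵀ L = -1` make `T` invertible and give `A L = 0 = B L`, hence `A B = A` and `B A = B`;
`I_Sᵀ r = 0 = I_Uᵀ r` gives `A r = r = B r`; and `rank (R E) = δ` makes `R` invertible. So
`[[A, r], [0, R E]] = diag(A, R) · [[B, r], [0, E]]` and
`[[B, r], [0, E]] = diag(B, R⁻¹) · [[A, r], [0, R E]]`, and each row space contains the other.
-/

section

variable {K : Type*} [Field K]

lemma rowSpace_mul_le_s10 {ι κ η : Type*} [Fintype κ] (P : Matrix ι κ K) (M : Matrix κ η K) :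
    rowSpace (P * M) ≤ rowSpace M := by
  refine Submodule.span_le.2 (Set.range_subset_iff.2 fun i => ?_)
  change P i ᵥ* M ∈ rowSpace M
  rw [vecMul_eq_sum]
  exact Submodule.sum_mem _ fun k _ =>
    Submodule.smul_mem _ _ (Submodule.subset_span ⟨k, rfl⟩)

lemma rowSpace_fromBlocks_le {ι κ η η' : Type*} [Fintype ι] [Fintype η]
    {A B : Matrix ι ι K} {r : Matrix ι κ K} {E : Matrix η κ K} {E' : Matrix η' κ K}
    (X : Matrix η' η K) (hAB : A * B = A) (hAr : A * r = r) (hE : X * E = E') :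
    rowSpace (fromBlocks A r 0 E') ≤ rowSpace (fromBlocks B r 0 E) := by
  have hfactor : fromBlocks A r 0 E' = fromBlocks A 0 0 X * fromBlocks B r 0 E := by
    simp [fromBlocks_multiply, hAB, hAr, hE]
  rw [hfactor]
  exact rowSpace_mul_le_s10 _ _

lemma isUnit_of_rank_eq_card {ι : Type*} [Fintype ι] [DecidableEq ι] {A : Matrix ι ι K}
    (h : A.rank = Fintype.card ι) : IsUnit A := by
  rw [← mulVec_surjective_iff_isUnit, ← coe_mulVecLin, ← LinearMap.range_eq_top]
  apply Submodule.eq_top_of_finrank_eq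
  rw [← rank, h, Module.finrank_fintype_fun_eq_card]

end

section

variable {R : Type*} [Ring R] {ι κ ν : Type*} [Fintype ι] [Fintype ν] [DecidableEq ι]

lemma one_add_mul_mul_of_mul_eq_neg_one [DecidableEq ν] {L : Matrix ι ν R} {P : Matrix ν ι R}
    (h : P * L = -1) : (1 + L * P) * L = 0 := by
  rw [Matrix.add_mul, Matrix.one_mul, Matrix.mul_assoc, h, Matrix.mul_neg, Matrix.mul_one,
    add_neg_cancel]

lemma one_add_mul_mul_of_mul_eq_zero (L : Matrix ι ν R) {P : Matrix ν ι R} {r : Matrix ι κ R}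
    (h : P * r = 0) : (1 + L * P) * r = r := by
  rw [Matrix.add_mul, Matrix.one_mul, Matrix.mul_assoc, h, Matrix.mul_zero, add_zero]

lemma mul_one_add_mul_of_mul_eq_zero {A : Matrix ι ι R} {L : Matrix ι ν R} (P : Matrix ν ι R)
    (h : A * L = 0) : A * (1 + L * P) = A := by
  rw [Matrix.mul_add, Matrix.mul_one, ← Matrix.mul_assoc, h, Matrix.zero_mul, add_zero]

end

theorem reduction_independent_of_presentation_general
    {F : Type*} [Field F] {n m μ δ : ℕ}
    (r : Matrix (Fin n) (Fin m) F) (L : Matrix (Fin n) (Fin μ) F)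
    (E : Matrix (Fin δ) (Fin m) F)
    (U S : Finset (Fin n)) (hU : U.card = μ) (hS : S.card = μ)
    (T : Matrix (Fin μ) (Fin μ) F) (R : Matrix (Fin δ) (Fin δ) F)
    (h1 : (unitColumns F U hU)ᵀ * r = 0)
    (h2 : (unitColumns F U hU)ᵀ * L = -1)
    (h1' : (unitColumns F S hS)ᵀ * r = 0)
    (h2' : (unitColumns F S hS)ᵀ * (L * T) = -1)
    (h3' : (R * E).rank = δ) :
    rowSpace (Matrix.fromBlocks (1 + (L * T) * (unitColumns F S hS)ᵀ) r 0 (R * E))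
      = rowSpace (Matrix.fromBlocks (1 + L * (unitColumns F U hU)ᵀ) r 0 E) := by
  set A := 1 + (L * T) * (unitColumns F S hS)ᵀ
  set B := 1 + L * (unitColumns F U hU)ᵀ
  have hT : IsUnit T.det := by
    refine isUnit_det_of_left_inverse (B := -((unitColumns F S hS)ᵀ * L)) ?_
    rw [Matrix.neg_mul, Matrix.mul_assoc, h2', neg_neg]
  have hAL : A * L = 0 := by
    rw [← Matrix.mul_one L, ← mul_nonsing_inv T hT, ← Matrix.mul_assoc L,
      ← Matrix.mul_assoc, one_add_mul_mul_of_mul_eq_neg_one h2', Matrix.zero_mul]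
  have hBLT : B * (L * T) = 0 := by
    rw [← Matrix.mul_assoc, one_add_mul_mul_of_mul_eq_neg_one h2, Matrix.zero_mul]
  have hR : IsUnit R.det := by
    rw [← isUnit_iff_isUnit_det]
    refine isUnit_of_rank_eq_card (le_antisymm R.rank_le_card_width ?_)
    simpa [h3'] using rank_mul_le_left R E
  apply le_antisymm
  · exact rowSpace_fromBlocks_le R (mul_one_add_mul_of_mul_eq_zero _ hAL)
      (one_add_mul_mul_of_mul_eq_zero _ h1') rfl
  · exact rowSpace_fromBlocks_le R⁻¹
      (mul_one_add_mul_of_mul_eq_zero _ hBLT) (one_add_mul_mul_of_mul_eq_zero _ h1)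
      (by rw [← Matrix.mul_assoc, nonsing_inv_mul R hR, Matrix.one_mul])

/-- if both `(r, L, E)` with `U` and `(r, L*T, R*E)` with `S`
satisfy the reduction conditions, then the corresponding block matrices have
the same row space. -/
theorem reduction_independent_of_presentation
    {F : Type*} [Field F] [Fintype F] {n m μ δ : ℕ}
    (r : Matrix (Fin n) (Fin m) F) (L : Matrix (Fin n) (Fin μ) F)
    (E : Matrix (Fin δ) (Fin m) F)
    (U S : Finset (Fin n)) (hU : U.card = μ) (hS : S.card = μ)
    (T : Matrix (Fin μ) (Fin μ) F) (R : Matrix (Fin δ) (Fin δ) F)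
    (h1 : (unitColumns F U hU)ᵀ * r = 0)
    (h2 : (unitColumns F U hU)ᵀ * L = -1)
    (h3 : E.rank = δ)
    (h1' : (unitColumns F S hS)ᵀ * r = 0)
    (h2' : (unitColumns F S hS)ᵀ * (L * T) = -1)
    (h3' : (R * E).rank = δ) :
    rowSpace (Matrix.fromBlocks (1 + (L * T) * (unitColumns F S hS)ᵀ) r 0 (R * E))
      = rowSpace (Matrix.fromBlocks (1 + L * (unitColumns F U hU)ᵀ) r 0 E) :=
  reduction_independent_of_presentation_general r L E U S hU hS T R h1 h2 h1' h2' h3'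
end

section
/- Let e ∈ F_q^{n×m}, L̂ ∈ F_q^{n×μ} with rank L̂ = μ, and Ê ∈ F_q^{δ×m} with rank Ê = δ. Then rank [[L̂ , e],[0 , Ê]] = μ + δ + min{ rank(e − L̂·E⁽¹⁾ − L⁽²⁾·Ê) : E⁽¹⁾ ∈ F_q^{μ×m}, L⁽²⁾ ∈ F_q^{n×δ} }. -/
/-!
Let `L'` be a left inverse of `L` and `E'` a right inverse of `E`, and put `P = 1 - L L'`,
`Q = 1 - E' E`. Block row and column operations replace `e` by any `e - L E₁ - L₂ E` without
changing the rank of `[[L, e], [0, E]]`; since `P L = 0` and `E Q = 0`, every such matrix is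
mapped by `X ↦ P X Q` to the same matrix `P e Q`, which is itself of this form. So `P e Q` has the
least rank. For `r = P e Q` we have `L' r = 0` and `r E' = 0`, and multiplying `[[L, r], [0, E]]`
on both sides by one-sidedly invertible block matrices brings it to `diag(1_μ, 1_δ, r)`.
-/

open Matrix

theorem Submodule.finrank_prod_eq {K V W : Type*} [Field K] [AddCommGroup V] [Module K V]
    [AddCommGroup W] [Module K W] [FiniteDimensional K V] [FiniteDimensional K W]
    (p : Submodule K V) (q : Submodule K W) :
    Module.finrank K (p.prod q) = Module.finrank K p + Module.finrank K q := by
  have hinj : Function.Injective (p.subtype.prodMap q.subtype) :=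
    Prod.map_injective.mpr ⟨p.injective_subtype, q.injective_subtype⟩
  rw [← Module.finrank_prod, ← LinearMap.finrank_range_of_inj hinj, LinearMap.range_prodMap,
    Submodule.range_subtype, Submodule.range_subtype]

namespace Matrix

section Field

variable {K : Type*} [Field K] {k n m d : Type*} [Fintype k] [Fintype n] [Fintype m] [Fintype d]

theorem rank_fromBlocks_zero_zero (A : Matrix n k K) (D : Matrix d m K) :
    (fromBlocks A 0 0 D).rank = A.rank + D.rank := by
  have h : (fromBlocks A 0 0 D).mulVecLin =
      (LinearEquiv.sumArrowLequivProdArrow n d K K).symm.toLinearMap ∘ₗ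
        A.mulVecLin.prodMap D.mulVecLin ∘ₗ
          (LinearEquiv.sumArrowLequivProdArrow k m K K).toLinearMap :=
    LinearMap.ext fun v => funext fun i => by cases i <;> simp [fromBlocks_mulVec] <;> rfl
  rw [Matrix.rank, h, LinearMap.range_comp,
    LinearMap.range_comp_of_range_eq_top _ (LinearEquiv.range _), LinearEquiv.finrank_map_eq,
    LinearMap.range_prodMap, Submodule.finrank_prod_eq]
  rfl

theorem exists_mul_eq_one_of_rank_eq_card_height [DecidableEq k] [DecidableEq n]
    (A : Matrix n k K) (hA : A.rank = Fintype.card n) : ∃ B : Matrix k n K, A * B = 1 := by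
  have hsurj : LinearMap.range A.mulVecLin = ⊤ :=
    Submodule.eq_top_of_finrank_eq (by rw [← Matrix.rank, hA, Module.finrank_fintype_fun_eq_card])
  obtain ⟨g, hg⟩ := A.mulVecLin.exists_rightInverse_of_surjective hsurj
  refine ⟨LinearMap.toMatrix' g, Matrix.toLin'.injective ?_⟩
  rw [Matrix.toLin'_mul, Matrix.toLin'_toMatrix', Matrix.toLin'_one]
  exact hg

theorem exists_mul_eq_one_of_rank_eq_card_width [DecidableEq k] [DecidableEq n]
    (A : Matrix n k K) (hA : A.rank = Fintype.card k) : ∃ B : Matrix k n K, B * A = 1 := by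
  obtain ⟨B, hB⟩ := exists_mul_eq_one_of_rank_eq_card_height Aᵀ (by rw [rank_transpose, hA])
  exact ⟨Bᵀ, by rw [← transpose_transpose A, ← transpose_mul, hB, transpose_one]⟩

end Field

theorem one_sub_mul_mul_one_sub {R : Type*} [Ring R] {k n m d : Type*} [Fintype k] [Fintype n]
    [Fintype m] [Fintype d] [DecidableEq n] [DecidableEq m] (L : Matrix n k R) (L' : Matrix k n R)
    (e : Matrix n m R) (E : Matrix d m R) (E' : Matrix m d R) :
    (1 - L * L') * e * (1 - E' * E) = e - L * (L' * e) - (1 - L * L') * e * E' * E := by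
  simp only [Matrix.mul_sub, Matrix.sub_mul, Matrix.mul_one, Matrix.one_mul, Matrix.mul_assoc]

section CommRing

variable {R : Type*} [CommRing R] [StrongRankCondition R]
  {k n m d : Type*} [Fintype k] [Fintype n] [Fintype m] [Fintype d]

theorem rank_mul_mul_of_mul_eq_one [DecidableEq k] [DecidableEq n]
    {k' n' : Type*} [Fintype k'] [Fintype n']
    {X' : Matrix n n' R} {X : Matrix n' n R} {Y : Matrix k k' R} {Y' : Matrix k' k R}
    (hX : X' * X = 1) (hY : Y * Y' = 1) (M : Matrix n k R) :
    (X * M * Y).rank = M.rank := by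
  refine le_antisymm ((rank_mul_le_left _ _).trans (rank_mul_le_right _ _)) ?_
  calc M.rank = (X' * (X * M * Y) * Y').rank := by
        simp only [Matrix.mul_assoc]
        rw [hY, Matrix.mul_one, ← Matrix.mul_assoc, hX, Matrix.one_mul]
    _ ≤ (X * M * Y).rank := (rank_mul_le_left _ _).trans (rank_mul_le_right _ _)

theorem rank_fromBlocks_sub_mul_sub_mul [DecidableEq k] [DecidableEq n] [DecidableEq m]
    [DecidableEq d] (L : Matrix n k R) (e : Matrix n m R) (E : Matrix d m R)
    (E₁ : Matrix k m R) (L₂ : Matrix n d R) :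
    (fromBlocks L (e - L * E₁ - L₂ * E) 0 E).rank = (fromBlocks L e 0 E).rank := by
  have h : fromBlocks L (e - L * E₁ - L₂ * E) 0 E =
      fromBlocks (1 : Matrix n n R) (-L₂) 0 (1 : Matrix d d R) * fromBlocks L e 0 E *
        fromBlocks (1 : Matrix k k R) (-E₁) 0 (1 : Matrix m m R) := by
    simp [fromBlocks_multiply, sub_eq_add_neg]
    abel
  rw [h]
  exact rank_mul_mul_of_mul_eq_one (X' := fromBlocks 1 L₂ 0 1) (Y' := fromBlocks 1 E₁ 0 1)
    (by simp [fromBlocks_multiply]) (by simp [fromBlocks_multiply]) _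

theorem isLeast_rank_sub_mul_sub_mul [DecidableEq k] [DecidableEq n] [DecidableEq m]
    [DecidableEq d] {L : Matrix n k R} {L' : Matrix k n R} {E : Matrix d m R}
    {E' : Matrix m d R} (hL : L' * L = 1) (hE : E * E' = 1)
    (e : Matrix n m R) :
    IsLeast
      {r | ∃ (E₁ : Matrix k m R) (L₂ : Matrix n d R), r = (e - L * E₁ - L₂ * E).rank}
      ((1 - L * L') * e * (1 - E' * E)).rank := by
  refine ⟨⟨L' * e, (1 - L * L') * e * E', by rw [one_sub_mul_mul_one_sub]⟩, ?_⟩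
  rintro _ ⟨E₁, L₂, rfl⟩
  have hPL : (1 - L * L') * L = 0 := by
    rw [Matrix.sub_mul, Matrix.mul_assoc, hL, Matrix.one_mul, Matrix.mul_one, sub_self]
  have hEQ : E * (1 - E' * E) = 0 := by
    rw [Matrix.mul_sub, ← Matrix.mul_assoc, hE, Matrix.one_mul, Matrix.mul_one, sub_self]
  have hPe :
      (1 - L * L') * (e - L * E₁ - L₂ * E) = (1 - L * L') * e - (1 - L * L') * L₂ * E := by
    rw [Matrix.mul_sub, Matrix.mul_sub, ← Matrix.mul_assoc _ L, hPL, Matrix.zero_mul, sub_zero,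
      Matrix.mul_assoc]
  calc ((1 - L * L') * e * (1 - E' * E)).rank
      = ((1 - L * L') * (e - L * E₁ - L₂ * E) * (1 - E' * E)).rank := by
        rw [hPe, Matrix.sub_mul ((1 - L * L') * e), Matrix.mul_assoc ((1 - L * L') * L₂) E, hEQ,
          Matrix.mul_zero, sub_zero]
    _ ≤ (e - L * E₁ - L₂ * E).rank := (rank_mul_le_left _ _).trans (rank_mul_le_right _ _)

end CommRing

theorem rank_fromBlocks_of_mul_eq_zero {K : Type*} [Field K]
    {k n m d : Type*} [Fintype k] [Fintype n] [Fintype m] [Fintype d]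
    [DecidableEq k] [DecidableEq n] [DecidableEq m] [DecidableEq d]
    {L : Matrix n k K} {L' : Matrix k n K} {E : Matrix d m K} {E' : Matrix m d K}
    (hL : L' * L = 1) (hE : E * E' = 1) {r : Matrix n m K} (hLr : L' * r = 0)
    (hrE : r * E' = 0) :
    (fromBlocks L r 0 E).rank = Fintype.card k + Fintype.card d + r.rank := by
  let X : Matrix ((k ⊕ d) ⊕ n) (n ⊕ d) K :=
    fromBlocks (fromRows L' 0) (fromRows 0 1) (1 - L * L') 0
  let Y : Matrix (k ⊕ m) ((k ⊕ d) ⊕ m) K :=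
    fromBlocks (fromCols 1 0) 0 (fromCols 0 E') (1 - E' * E)
  have hX :
      fromBlocks (fromCols L 0) (1 : Matrix n n K) (fromCols 0 (1 : Matrix d d K)) 0 * X = 1 := by
    simp [X, fromBlocks_multiply, fromCols_mul_fromRows]
  have hY :
      Y * fromBlocks (fromRows (1 : Matrix k k K) 0) (fromRows 0 E) 0 (1 : Matrix m m K) = 1 := by
    simp [Y, fromBlocks_multiply, fromCols_mul_fromRows]
  have hXM : X * fromBlocks L r 0 E = fromBlocks (fromRows 1 0) (fromRows 0 E) 0 r := by
    simp [X, fromBlocks_multiply, fromRows_mul, hL, hLr, Matrix.sub_mul, Matrix.mul_assoc]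
  have hXMY : X * fromBlocks L r 0 E * Y = fromBlocks 1 0 0 r := by
    rw [hXM]
    simp only [Y, fromBlocks_multiply, fromRows_mul_fromCols, fromBlocks_add]
    simp [fromRows_mul, hE, hrE, Matrix.mul_sub, ← Matrix.mul_assoc]
  rw [← rank_mul_mul_of_mul_eq_one hX hY, hXMY, rank_fromBlocks_zero_zero, rank_one,
    Fintype.card_sum]

end Matrix

theorem rank_block_eq_min_rank_general
    {F : Type*} [Field F] {n m μ δ : ℕ}
    (e : Matrix (Fin n) (Fin m) F)
    (L : Matrix (Fin n) (Fin μ) F) (hL : L.rank = μ)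
    (E : Matrix (Fin δ) (Fin m) F) (hE : E.rank = δ) :
    (Matrix.fromBlocks L e 0 E).rank
      = μ + δ + sInf {k : ℕ | ∃ (E1 : Matrix (Fin μ) (Fin m) F)
          (L2 : Matrix (Fin n) (Fin δ) F), k = (e - L * E1 - L2 * E).rank} := by
  obtain ⟨L', hL'⟩ := exists_mul_eq_one_of_rank_eq_card_width L (by rw [hL, Fintype.card_fin])
  obtain ⟨E', hE'⟩ := exists_mul_eq_one_of_rank_eq_card_height E (by rw [hE, Fintype.card_fin])
  have hLr : L' * ((1 - L * L') * e * (1 - E' * E)) = 0 := by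
    simp only [← Matrix.mul_assoc, Matrix.mul_sub, hL', Matrix.mul_one, Matrix.one_mul, sub_self,
      Matrix.zero_mul]
  have hrE : (1 - L * L') * e * (1 - E' * E) * E' = 0 := by
    simp only [Matrix.mul_assoc, Matrix.sub_mul, hE', Matrix.mul_one, Matrix.one_mul, sub_self,
      Matrix.mul_zero]
  rw [(isLeast_rank_sub_mul_sub_mul hL' hE' e).csInf_eq,
    ← rank_fromBlocks_sub_mul_sub_mul L e E (L' * e) ((1 - L * L') * e * E'),
    ← one_sub_mul_mul_one_sub, rank_fromBlocks_of_mul_eq_zero hL' hE' hLr hrE,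
    Fintype.card_fin, Fintype.card_fin]

/-- for `e ∈ F_q^{n×m}`, `L ∈ F_q^{n×μ}` of rank `μ` and
`E ∈ F_q^{δ×m}` of rank `δ`,
`rank [[L, e],[0, E]] = μ + δ + min { rank(e − L·E1 − L2·E) }`. -/
theorem rank_block_eq_min_rank
    {F : Type*} [Field F] [Fintype F] {n m μ δ : ℕ}
    (e : Matrix (Fin n) (Fin m) F)
    (L : Matrix (Fin n) (Fin μ) F) (hL : L.rank = μ)
    (E : Matrix (Fin δ) (Fin m) F) (hE : E.rank = δ) :
    (Matrix.fromBlocks L e 0 E).rank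
      = μ + δ + sInf {k : ℕ | ∃ (E1 : Matrix (Fin μ) (Fin m) F)
          (L2 : Matrix (Fin n) (Fin δ) F), k = (e - L * E1 - L2 * E).rank} :=
  rank_block_eq_min_rank_general e L hL E hE
end

section
/- Let C ⊆ F_q^{n×m} be a rank-metric code containing two codewords x, x' with rank(x' − x) = d. Then for all integers μ, δ, ε ≥ 0 with 2ε + μ + δ ≥ d and μ + δ + ε ≤ d, there exist r ∈ F_q^{n×m}, L̂ ∈ F_q^{n×μ} with rank L̂ = μ, and Ê ∈ F_q^{δ×m} with rank Ê = δ, such that rank [[L̂ , r − x],[0 , Ê]] = μ + δ + ε and rank [[L̂ , r − x'],[0 , Ê]] = μ + δ + (d − μ − δ − ε) ≤ μ + δ + ε. Consequently x is not the unique minimizer over C of rank [[L̂ , r − c],[0 , Ê]], so the errata pattern cannot be corrected; hence a code of minimum rank distance d cannot correct every pattern of ε errors, μ erasures and δ deviations when 2ε + μ + δ ≥ d. -/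
open Matrix

/-!
Factor `x' - x = A * B` with `A` left- and `B` right-invertible, the inner dimension `d` split
into blocks of sizes `μ, δ, ε` and `ρ = d - μ - δ - ε`. Take `L` to be the `μ`-block columns of
`A`, `E` the `δ`-block rows of `B`, and `r = x + A P B` with `P` the coordinate projection onto
the `ε`-block, so that `r - x = A P B` and `r - x' = A (P - 1) B`. Multiplying by block matrices
with one-sided inverses, `[[L, A Z B], [0, E]]` has the rank of `[[L₀, Z], [0, E₀]]`, where `L₀`
and `E₀` select the `μ`- and `δ`-coordinates. For diagonal `Z`, column operations with `L₀` and
row operations with `E₀` clear `Z` on those coordinates, so the rank is `μ + δ` plus the number of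
nonzero diagonal entries of `Z` on the `ε`- and `ρ`-blocks: `ε` for `Z = P`, `ρ` for `Z = P - 1`.
-/

namespace Matrix

section OneSidedInverse

variable {R : Type*} [CommSemiring R] [StrongRankCondition R] {m n p q : Type*} [Fintype m] [Fintype n] [Fintype p] [Fintype q]
  [DecidableEq p] [DecidableEq q]

theorem rank_mul_mul_of_mul_eq_one_s15 {A : Matrix m p R} {A' : Matrix p m R}
    {B : Matrix q n R} {B' : Matrix n q R} (hA : A' * A = 1) (hB : B * B' = 1)
    (D : Matrix p q R) : (A * D * B).rank = D.rank := by
  refine le_antisymm ((rank_mul_le_left _ _).trans (rank_mul_le_right _ _)) ?_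
  calc D.rank = (A' * (A * D * B) * B').rank := by
        rw [← Matrix.mul_assoc, ← Matrix.mul_assoc, hA, Matrix.one_mul, Matrix.mul_assoc, hB,
          Matrix.mul_one]
    _ ≤ (A * D * B).rank := (rank_mul_le_left _ _).trans (rank_mul_le_right _ _)

theorem rank_eq_card_of_mul_eq_one_left {A : Matrix m p R} {A' : Matrix p m R}
    (hA : A' * A = 1) : A.rank = Fintype.card p := by
  simpa using rank_mul_mul_of_mul_eq_one_s15 hA (Matrix.mul_one (1 : Matrix p p R)) 1

theorem rank_eq_card_of_mul_eq_one_right {B : Matrix q n R} {B' : Matrix n q R}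
    (hB : B * B' = 1) : B.rank = Fintype.card q := by
  simpa using rank_mul_mul_of_mul_eq_one_s15 (Matrix.one_mul (1 : Matrix q q R)) hB 1

theorem rank_mul_submatrix_one {α : Type*} [Fintype α] [DecidableEq α] {f : α → p}
    (hf : Function.Injective f) {A : Matrix m p R} {A' : Matrix p m R} (hA : A' * A = 1) :
    (A * (1 : Matrix p p R).submatrix id f).rank = Fintype.card α := by
  refine rank_eq_card_of_mul_eq_one_left (A' := (1 : Matrix p p R).submatrix f id * A') ?_
  rw [Matrix.mul_assoc, ← Matrix.mul_assoc A', hA, Matrix.one_mul,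
    ← submatrix_mul _ _ _ _ _ Function.bijective_id, Matrix.one_mul, submatrix_one _ hf]

theorem rank_submatrix_one_mul {γ : Type*} [Fintype γ] [DecidableEq γ] {f : γ → q}
    (hf : Function.Injective f) {B : Matrix q n R} {B' : Matrix n q R} (hB : B * B' = 1) :
    ((1 : Matrix q q R).submatrix f id * B).rank = Fintype.card γ := by
  refine rank_eq_card_of_mul_eq_one_right (B' := B' * (1 : Matrix q q R).submatrix id f) ?_
  rw [Matrix.mul_assoc, ← Matrix.mul_assoc B, hB, Matrix.one_mul,
    ← submatrix_mul _ _ _ _ _ Function.bijective_id, Matrix.one_mul, submatrix_one _ hf]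

theorem rank_fromBlocks_mul_of_mul_eq_one {α γ : Type*} [Fintype α] [Fintype γ]
    [DecidableEq γ] [DecidableEq α] {A : Matrix m p R} {A' : Matrix p m R}
    {B : Matrix q n R} {B' : Matrix n q R} (hA : A' * A = 1) (hB : B * B' = 1)
    (L : Matrix p α R) (Y : Matrix p q R) (E : Matrix γ q R) :
    (fromBlocks (A * L) (A * Y * B) 0 (E * B)).rank = (fromBlocks L Y 0 E).rank := by
  have hA' : fromBlocks A' 0 0 (1 : Matrix γ γ R) * fromBlocks A 0 0 (1 : Matrix γ γ R) = 1 := by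
    simp [fromBlocks_multiply, hA]
  have hB' : fromBlocks (1 : Matrix α α R) 0 0 B * fromBlocks (1 : Matrix α α R) 0 0 B' = 1 := by
    simp [fromBlocks_multiply, hB]
  rw [← rank_mul_mul_of_mul_eq_one_s15 hA' hB']
  simp [fromBlocks_multiply, Matrix.mul_assoc]

end OneSidedInverse

variable {F : Type*} [Field F]

theorem exists_mul_eq_of_rank_eq {m n ι : Type*} [Fintype m] [Fintype n] [Fintype ι]
    [DecidableEq m] [DecidableEq n] [DecidableEq ι]
    (M : Matrix m n F) (h : M.rank = Fintype.card ι) :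
    ∃ (A : Matrix m ι F) (A' : Matrix ι m F) (B : Matrix ι n F) (B' : Matrix n ι F),
      A' * A = 1 ∧ B * B' = 1 ∧ M = A * B := by
  let f := M.mulVecLin
  let e : LinearMap.range f ≃ₗ[F] (ι → F) :=
    LinearEquiv.ofFinrankEq _ _ (by rw [Module.finrank_fintype_fun_eq_card]; exact h)
  let a := (LinearMap.range f).subtype ∘ₗ e.symm.toLinearMap
  let b := e.toLinearMap ∘ₗ f.rangeRestrict
  obtain ⟨a', ha'⟩ := a.exists_leftInverse_of_injective
    (LinearMap.ker_eq_bot.mpr (Subtype.val_injective.comp e.symm.injective))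
  obtain ⟨b', hb'⟩ := b.exists_rightInverse_of_surjective (by simp [b, LinearMap.range_comp])
  refine ⟨a.toMatrix', a'.toMatrix', b.toMatrix', b'.toMatrix', ?_, ?_, ?_⟩
  · rw [← LinearMap.toMatrix'_comp, ha', LinearMap.toMatrix'_id]
  · rw [← LinearMap.toMatrix'_comp, hb', LinearMap.toMatrix'_id]
  · have hab : a ∘ₗ b = f := by ext v; simp [a, b]
    rw [← LinearMap.toMatrix'_comp, hab]
    exact (LinearMap.toMatrix'_toLin' M).symm

section Selection

variable {α γ κ : Type*} [Fintype α] [Fintype γ] [Fintype κ]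
  [DecidableEq α] [DecidableEq γ] [DecidableEq κ]

theorem rank_fromBlocks_diagonal [DecidableEq F] (v : α ⊕ γ ⊕ κ → F) :
    (fromBlocks ((1 : Matrix (α ⊕ γ ⊕ κ) (α ⊕ γ ⊕ κ) F).submatrix id Sum.inl) (diagonal v) 0
      ((1 : Matrix (α ⊕ γ ⊕ κ) (α ⊕ γ ⊕ κ) F).submatrix (Sum.inr ∘ Sum.inl) id)).rank =
      Fintype.card α + Fintype.card γ + Fintype.card {k // v (Sum.inr (Sum.inr k)) ≠ 0} := by
  set L : Matrix (α ⊕ γ ⊕ κ) α F := (1 : Matrix (α ⊕ γ ⊕ κ) (α ⊕ γ ⊕ κ) F).submatrix id Sum.inl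
  set E : Matrix γ (α ⊕ γ ⊕ κ) F :=
    (1 : Matrix (α ⊕ γ ⊕ κ) (α ⊕ γ ⊕ κ) F).submatrix (Sum.inr ∘ Sum.inl) id
  set P : Matrix ((α ⊕ γ ⊕ κ) ⊕ γ) (α ⊕ γ ⊕ κ) F :=
    fromRows (diagonal (Sum.elim 1 (Sum.elim (fun c => v (Sum.inr (Sum.inl c))) 1))) E
  set D : Matrix (α ⊕ γ ⊕ κ) (α ⊕ γ ⊕ κ) F :=
    diagonal (Sum.elim 1 (Sum.elim 1 fun k => v (Sum.inr (Sum.inr k))))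
  set Q : Matrix (α ⊕ γ ⊕ κ) (α ⊕ α ⊕ γ ⊕ κ) F :=
    fromCols L (diagonal (Sum.elim (fun a => v (Sum.inl a)) 1))
  have hM : fromBlocks L (diagonal v) 0 E = P * D * Q := by
    rw [fromRows_mul, fromRows_mul_fromCols]
    ext ((i | i | i) | i) (j | j | j | j) <;>
      simp [L, E, D, Matrix.mul_apply, one_apply, diagonal_apply]
  have hP : fromCols (diagonal (Sum.elim 1 (Sum.elim 0 1))) Eᵀ * P = 1 := by
    rw [fromCols_mul_fromRows]
    ext (i | i | i) (j | j | j) <;> simp [E, Matrix.mul_apply, one_apply, diagonal_apply]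
  have hQ : Q * fromRows Lᵀ (diagonal (Sum.elim 0 1)) = 1 := by
    rw [fromCols_mul_fromRows]
    ext (i | i | i) (j | j | j) <;> simp [L, Matrix.mul_apply, one_apply, diagonal_apply]
  rw [hM, rank_mul_mul_of_mul_eq_one_s15 hP hQ, rank_diagonal, Fintype.card_congr Equiv.subtypeSum,
    Fintype.card_sum, Fintype.card_congr Equiv.subtypeSum, Fintype.card_sum]
  simp only [Sum.elim_inl, Sum.elim_inr, Pi.one_apply, ne_eq, one_ne_zero, not_false_eq_true,
    Fintype.card_subtype_true, add_assoc]
  congr 2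

end Selection

end Matrix

theorem errata_pattern_not_correctable_general
    {F : Type*} [Field F] {n m d : ℕ}
    (x x' : Matrix (Fin n) (Fin m) F)
    (hd : (x' - x).rank = d)
    (μ δ ε : ℕ) (h1 : d ≤ 2 * ε + μ + δ) (h2 : μ + δ + ε ≤ d) :
    ∃ (r : Matrix (Fin n) (Fin m) F) (L : Matrix (Fin n) (Fin μ) F)
      (E : Matrix (Fin δ) (Fin m) F),
      L.rank = μ ∧ E.rank = δ ∧
      (Matrix.fromBlocks L (r - x) 0 E).rank = μ + δ + ε ∧
      (Matrix.fromBlocks L (r - x') 0 E).rank = μ + δ + (d - μ - δ - ε) ∧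
      (Matrix.fromBlocks L (r - x') 0 E).rank ≤ μ + δ + ε := by
  classical
  set ρ := d - μ - δ - ε
  obtain ⟨A, A', B, B', hA, hB, hAB⟩ := exists_mul_eq_of_rank_eq
    (ι := Fin μ ⊕ Fin δ ⊕ Fin ε ⊕ Fin ρ) (x' - x) (by simp [ρ]; omega)
  set v : Fin μ ⊕ Fin δ ⊕ Fin ε ⊕ Fin ρ → F := Sum.elim 0 (Sum.elim 0 (Sum.elim 1 0))
  set r := x + A * diagonal v * B
  have hrx : r - x = A * diagonal v * B := add_sub_cancel_left _ _
  have hrx' : r - x' = A * diagonal (v - 1) * B :=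
    calc r - x' = A * diagonal v * B - (x' - x) := by simp only [r]; abel
      _ = A * (diagonal v - 1) * B := by rw [hAB, Matrix.mul_sub, Matrix.sub_mul, Matrix.mul_one]
      _ = A * diagonal (v - 1) * B := by rw [← diagonal_one, diagonal_sub]; rfl
  set I := (1 : Matrix (Fin μ ⊕ Fin δ ⊕ Fin ε ⊕ Fin ρ) (Fin μ ⊕ Fin δ ⊕ Fin ε ⊕ Fin ρ) F)
  have hrank (w : Fin μ ⊕ Fin δ ⊕ Fin ε ⊕ Fin ρ → F) :
      (fromBlocks (A * I.submatrix id Sum.inl) (A * diagonal w * B) 0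
        (I.submatrix (Sum.inr ∘ Sum.inl) id * B)).rank =
        μ + δ + Fintype.card {k // w (Sum.inr (Sum.inr k)) ≠ 0} := by
    rw [rank_fromBlocks_mul_of_mul_eq_one hA hB, rank_fromBlocks_diagonal, Fintype.card_fin,
      Fintype.card_fin]
  have hε : Fintype.card {k // v (Sum.inr (Sum.inr k)) ≠ 0} = ε := by
    rw [Fintype.card_congr Equiv.subtypeSum, Fintype.card_sum]; simp [v]
  have hρ : Fintype.card {k // (v - 1) (Sum.inr (Sum.inr k)) ≠ 0} = ρ := by
    rw [Fintype.card_congr Equiv.subtypeSum, Fintype.card_sum]; simp [v]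
  refine ⟨r, A * I.submatrix id Sum.inl, I.submatrix (Sum.inr ∘ Sum.inl) id * B,
    (rank_mul_submatrix_one Sum.inl_injective hA).trans (Fintype.card_fin μ),
    (rank_submatrix_one_mul (Sum.inr_injective.comp Sum.inl_injective) hB).trans
      (Fintype.card_fin δ), by rw [hrx, hrank, hε], by rw [hrx', hrank, hρ], ?_⟩
  rw [hrx', hrank, hρ]
  omega

/-- if a rank-metric code contains codewords `x, x'` with
`rank(x' − x) = d`, then for all `μ, δ, ε ≥ 0` with `2ε + μ + δ ≥ d` and
`μ + δ + ε ≤ d` there is a received tuple `(r, L, E)` for which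
`rank [[L, r − x],[0, E]] = μ + δ + ε` while
`rank [[L, r − x'],[0, E]] = μ + δ + (d − μ − δ − ε) ≤ μ + δ + ε`; hence `x`
is not the unique minimizer and the errata pattern cannot be corrected. -/
theorem errata_pattern_not_correctable
    {F : Type*} [Field F] [Fintype F] {n m d : ℕ}
    (C : Set (Matrix (Fin n) (Fin m) F))
    (x x' : Matrix (Fin n) (Fin m) F) (hx : x ∈ C) (hx' : x' ∈ C)
    (hd : (x' - x).rank = d)
    (μ δ ε : ℕ) (h1 : d ≤ 2 * ε + μ + δ) (h2 : μ + δ + ε ≤ d) :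
    ∃ (r : Matrix (Fin n) (Fin m) F) (L : Matrix (Fin n) (Fin μ) F)
      (E : Matrix (Fin δ) (Fin m) F),
      L.rank = μ ∧ E.rank = δ ∧
      (Matrix.fromBlocks L (r - x) 0 E).rank = μ + δ + ε ∧
      (Matrix.fromBlocks L (r - x') 0 E).rank = μ + δ + (d - μ - δ - ε) ∧
      (Matrix.fromBlocks L (r - x') 0 E).rank ≤ μ + δ + ε :=
  errata_pattern_not_correctable_general x x' hd μ δ ε h1 h2
end

section
/- Let F = F_{q^m}, let d ≥ 2 and let μ, δ, ε ≥ 0 be integers with τ = μ + δ + ε. Let X_1,…,X_τ ∈ F and E_1,…,E_τ ∈ F, and define syndromes S_ℓ = Σ_{j=1}^{τ} X_j^{q^ℓ} E_j for 0 ≤ ℓ ≤ d−2. Let σ_0,…,σ_{δ+ε} ∈ F satisfy Σ_{i=0}^{δ+ε} σ_i E_j^{q^i} = 0 for every j ∈ {μ+1,…,τ}, and set β_j = Σ_{i=0}^{δ+ε} σ_i E_j^{q^i} for j ∈ {1,…,μ}. Then for every k with δ + ε ≤ k ≤ d − 2, Σ_{i=0}^{δ+ε} σ_i S_{k−i}^{q^i}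 = Σ_{j=1}^{μ} X_j^{q^k} β_j. -/
/-!
Applying the `q`-linearized polynomial `σ` to the syndromes commutes with the sums defining
them, because `x ↦ x ^ q ^ i` is additive: `Σ_i σ_i S_{k-i}^{q^i} = Σ_j X_j^{q^k} σ(E_j)`.
The terms with `μ ≤ j < τ` vanish since `σ` annihilates those `E_j`, and the others are
`X_j^{q^k} β_j`.
-/

open Finset

theorem sum_pow_expChar_pow_pow {R ι : Type*} [CommSemiring R] (p : ℕ) [ExpChar R p]
    (s i : ℕ) (t : Finset ι) (f : ι → R) :
    (∑ j ∈ t, f j) ^ (p ^ s) ^ i = ∑ j ∈ t, f j ^ (p ^ s) ^ i := by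
  rw [← pow_mul, sum_pow_char_pow]

theorem syndrome_pow_pow {R ι : Type*} [CommSemiring R] (p : ℕ) [ExpChar R p]
    (s : ℕ) (t : Finset ι) (X E : ι → R) {i k : ℕ} (hik : i ≤ k) :
    (∑ j ∈ t, X j ^ (p ^ s) ^ (k - i) * E j) ^ (p ^ s) ^ i
      = ∑ j ∈ t, X j ^ (p ^ s) ^ k * E j ^ (p ^ s) ^ i := by
  rw [sum_pow_expChar_pow_pow]
  refine sum_congr rfl fun j _ => ?_
  rw [mul_pow, ← pow_mul, ← pow_add, Nat.sub_add_cancel hik]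

theorem sum_mul_syndrome_pow_pow {R ι : Type*} [CommSemiring R] (p : ℕ) [ExpChar R p]
    (s : ℕ) (t : Finset ι) (X E : ι → R) (σ : ℕ → R) {n k : ℕ} (hnk : n ≤ k) :
    ∑ i ∈ range (n + 1), σ i * (∑ j ∈ t, X j ^ (p ^ s) ^ (k - i) * E j) ^ (p ^ s) ^ i
      = ∑ j ∈ t, X j ^ (p ^ s) ^ k * ∑ i ∈ range (n + 1), σ i * E j ^ (p ^ s) ^ i := by
  have hterm : ∀ i ∈ range (n + 1),
      σ i * (∑ j ∈ t, X j ^ (p ^ s) ^ (k - i) * E j) ^ (p ^ s) ^ i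
        = ∑ j ∈ t, X j ^ (p ^ s) ^ k * (σ i * E j ^ (p ^ s) ^ i) := fun i hi => by
    rw [syndrome_pow_pow p s t X E ((Nat.lt_succ_iff.1 (mem_range.1 hi)).trans hnk), mul_sum]
    exact sum_congr rfl fun j _ => mul_left_comm _ _ _
  rw [sum_congr rfl hterm, sum_comm]
  simp only [mul_sum]

theorem modified_syndrome_identity_general
    {F : Type*} [Field F] {p s q d μ δ ε τ : ℕ}
    [Fact p.Prime] [CharP F p]
    (hq : q = p ^ s) (hτ : τ = μ + δ + ε)
    (X E : ℕ → F)
    (S : ℕ → F)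
    (hS : ∀ ℓ ≤ d - 2, S ℓ = ∑ j ∈ Finset.range τ, X j ^ q ^ ℓ * E j)
    (σ : ℕ → F)
    (hσ : ∀ j, μ ≤ j → j < τ →
      ∑ i ∈ Finset.range (δ + ε + 1), σ i * E j ^ q ^ i = 0)
    (β : ℕ → F)
    (hβ : ∀ j < μ, β j = ∑ i ∈ Finset.range (δ + ε + 1), σ i * E j ^ q ^ i)
    (k : ℕ) (hk1 : δ + ε ≤ k) (hk2 : k ≤ d - 2) :
    ∑ i ∈ Finset.range (δ + ε + 1), σ i * S (k - i) ^ q ^ i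
      = ∑ j ∈ Finset.range μ, X j ^ q ^ k * β j := by
  subst hq
  have hsyndrome : ∀ i ∈ range (δ + ε + 1),
      σ i * S (k - i) ^ (p ^ s) ^ i
        = σ i * (∑ j ∈ range τ, X j ^ (p ^ s) ^ (k - i) * E j) ^ (p ^ s) ^ i :=
    fun i _ => by rw [hS _ ((Nat.sub_le k i).trans hk2)]
  have hannihilated : ∀ j ∈ Ico μ τ,
      X j ^ (p ^ s) ^ k * ∑ i ∈ range (δ + ε + 1), σ i * E j ^ (p ^ s) ^ i = 0 :=
    fun j hj => by rw [hσ j (mem_Ico.1 hj).1 (mem_Ico.1 hj).2, mul_zero]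
  rw [sum_congr rfl hsyndrome, sum_mul_syndrome_pow_pow p s _ X E σ hk1,
    ← sum_range_add_sum_Ico _ (show μ ≤ τ by omega), sum_eq_zero hannihilated, add_zero]
  exact sum_congr rfl fun j hj => by rw [hβ j (mem_range.1 hj)]

/-- with syndromes `S_ℓ = Σ_{j<τ} X_j^{q^ℓ} E_j` (for
`ℓ ≤ d−2`), an error-span polynomial `σ` of `q`-degree `δ+ε` annihilating
`E_j` for `μ ≤ j < τ`, and `β_j = Σ_i σ_i E_j^{q^i}` for `j < μ`, one has,
for all `δ + ε ≤ k ≤ d − 2`,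
`Σ_{i=0}^{δ+ε} σ_i S_{k−i}^{q^i} = Σ_{j<μ} X_j^{q^k} β_j`. -/
theorem modified_syndrome_identity
    {F : Type*} [Field F] [Fintype F] {p s mm q d μ δ ε τ : ℕ}
    [Fact p.Prime] [CharP F p]
    (hs : 1 ≤ s) (hq : q = p ^ s) (hcard : Fintype.card F = q ^ mm)
    (hd : 2 ≤ d) (hτ : τ = μ + δ + ε)
    (X E : ℕ → F)
    (S : ℕ → F)
    (hS : ∀ ℓ ≤ d - 2, S ℓ = ∑ j ∈ Finset.range τ, X j ^ q ^ ℓ * E j)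
    (σ : ℕ → F)
    (hσ : ∀ j, μ ≤ j → j < τ →
      ∑ i ∈ Finset.range (δ + ε + 1), σ i * E j ^ q ^ i = 0)
    (β : ℕ → F)
    (hβ : ∀ j < μ, β j = ∑ i ∈ Finset.range (δ + ε + 1), σ i * E j ^ q ^ i)
    (k : ℕ) (hk1 : δ + ε ≤ k) (hk2 : k ≤ d - 2) :
    ∑ i ∈ Finset.range (δ + ε + 1), σ i * S (k - i) ^ q ^ i
      = ∑ j ∈ Finset.range μ, X j ^ q ^ k * β j :=
  modified_syndrome_identity_general hq hτ X E S hS σ hσ β hβ k hk1 hk2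
end

section
/- (Key equation for generalized decoding of Gabidulin codes, coefficient form.) Let F = F_{q^m}, let d ≥ 2 and let μ, δ, ε ≥ 0 be integers with τ = μ + δ + ε. Let X_1,…,X_τ ∈ F and E_1,…,E_τ ∈ F, and define syndromes S_ℓ = Σ_{j=1}^{τ} X_j^{q^ℓ} E_j for 0 ≤ ℓ ≤ d−2. Let σ_0,…,σ_{δ+ε} ∈ F satisfy Σ_{i=0}^{δ+ε} σ_i E_j^{q^i} = 0 for every j ∈ {μ+1,…,τ}, and define T_k = Σ_{i=0}^{δ+ε} σ_i S_{k−i}^{q^i} for δ + ε ≤ k ≤ d − 2. Let λ_0,…,λ_μ ∈ F satisfy Σ_{i=0}^{μ} λ_i X_j^{q^i} = 0 for every j ∈ {1,…,μ}. Then for every ℓ with μ + δ + ε ≤ ℓ ≤ d − 2, Σ_{j=0}^{μ} λ_j^{q^{ℓ−μ}} · T_{ℓ−μ+j} = 0. (Equivalently, the coefficients of x^{q^ℓ}, for τ ≤ ℓ ≤ d−2, of the symbolic product σ_F(x) ⊗ S_DU(x) vanish, i.e., σ_F(x) ⊗ S_DU(x) ≡ ω(x) mod x^{q^{d−1}} with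 ω of q-degree at most τ − 1.) -/
/-- key equation, coefficient form: with syndromes
`S_ℓ = Σ_{j<τ} X_j^{q^ℓ} E_j` (for `ℓ ≤ d−2`), an error-span polynomial `σ`
annihilating `E_j` for `μ ≤ j < τ`, `T_k = Σ_i σ_i S_{k−i}^{q^i}` for
`δ+ε ≤ k ≤ d−2`, and an erasure-locator polynomial `λ` of `q`-degree `μ`
annihilating `X_j` for `j < μ`, one has, for all `μ + δ + ε ≤ ℓ ≤ d − 2`,
`Σ_{j=0}^{μ} λ_j^{q^{ℓ−μ}} · T_{ℓ−μ+j} = 0`. -/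
theorem key_equation_coefficients
    {F : Type*} [Field F] [Fintype F] {p s mm q d μ δ ε τ : ℕ}
    [Fact p.Prime] [CharP F p]
    (hs : 1 ≤ s) (hq : q = p ^ s) (hcard : Fintype.card F = q ^ mm)
    (hd : 2 ≤ d) (hτ : τ = μ + δ + ε)
    (X E : ℕ → F)
    (S : ℕ → F)
    (hS : ∀ ℓ ≤ d - 2, S ℓ = ∑ j ∈ Finset.range τ, X j ^ q ^ ℓ * E j)
    (σ : ℕ → F)
    (hσ : ∀ j, μ ≤ j → j < τ →
      ∑ i ∈ Finset.range (δ + ε + 1), σ i * E j ^ q ^ i = 0)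
    (lam : ℕ → F)
    (hlam : ∀ j < μ, ∑ i ∈ Finset.range (μ + 1), lam i * X j ^ q ^ i = 0)
    (T : ℕ → F)
    (hT : ∀ k, δ + ε ≤ k → k ≤ d - 2 →
      T k = ∑ i ∈ Finset.range (δ + ε + 1), σ i * S (k - i) ^ q ^ i)
    (ℓ : ℕ) (hℓ1 : μ + δ + ε ≤ ℓ) (hℓ2 : ℓ ≤ d - 2) :
    ∑ j ∈ Finset.range (μ + 1), lam j ^ q ^ (ℓ - μ) * T (ℓ - μ + j) = 0 := by
  classical
  set r := ℓ - μ with hr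
  have hrge : δ + ε ≤ r := by omega
  -- q-power of sums and products
  have hqsum : ∀ (n : ℕ) (u : Finset ℕ) (f : ℕ → F),
      (∑ i ∈ u, f i) ^ q ^ n = ∑ i ∈ u, f i ^ q ^ n := by
    intro n u f
    have : (∑ i ∈ u, f i) ^ p ^ (s * n) = ∑ i ∈ u, f i ^ p ^ (s * n) :=
      sum_pow_char_pow (R := F) (p := p) (n := s * n) u f
    simpa [hq, ← pow_mul] using this
  have hqmul : ∀ (n : ℕ) (a b : F), (a * b) ^ q ^ n = a ^ q ^ n * b ^ q ^ n :=
    fun n a b => mul_pow a b (q ^ n)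
  have hppow : ∀ (x : F) (a b : ℕ), (x ^ q ^ a) ^ q ^ b = x ^ q ^ (a + b) := by
    intro x a b; rw [← pow_mul, ← pow_add]
  have step1 : ∑ j ∈ Finset.range (μ + 1), lam j ^ q ^ r * T (r + j)
      = ∑ j ∈ Finset.range (μ + 1), ∑ i ∈ Finset.range (δ + ε + 1),
          ∑ t ∈ Finset.range τ,
            (σ i * E t ^ q ^ i) * (lam j ^ q ^ r * X t ^ q ^ (r + j)) := by
    refine Finset.sum_congr rfl fun j hj => ?_
    have hj' : j ≤ μ := Finset.mem_range_succ_iff.mp hj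
    rw [hT (r + j) (by omega) (by omega), Finset.mul_sum]
    refine Finset.sum_congr rfl fun i hi => ?_
    have hi' : i ≤ δ + ε := Finset.mem_range_succ_iff.mp hi
    rw [hS (r + j - i) (by omega), hqsum, Finset.mul_sum, Finset.mul_sum]
    refine Finset.sum_congr rfl fun t _ => ?_
    rw [hqmul, hppow]
    have : r + j - i + i = r + j := by omega
    rw [this]; ring
  rw [step1]
  rw [Finset.sum_comm]
  have step2 : ∀ i ∈ Finset.range (δ + ε + 1),
      ∑ j ∈ Finset.range (μ + 1), ∑ t ∈ Finset.range τ,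
          (σ i * E t ^ q ^ i) * (lam j ^ q ^ r * X t ^ q ^ (r + j))
      = ∑ t ∈ Finset.range τ, (σ i * E t ^ q ^ i) *
          ∑ j ∈ Finset.range (μ + 1), lam j ^ q ^ r * X t ^ q ^ (r + j) := by
    intro i _
    rw [Finset.sum_comm]
    exact Finset.sum_congr rfl fun t _ => by rw [Finset.mul_sum]
  rw [Finset.sum_congr rfl step2, Finset.sum_comm]
  refine Finset.sum_eq_zero fun t ht => ?_
  have ht' : t < τ := Finset.mem_range.mp ht
  by_cases htμ : t < μ
  · -- the erasure-locator factor vanishes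
    have hzero : ∑ j ∈ Finset.range (μ + 1), lam j ^ q ^ r * X t ^ q ^ (r + j) = 0 := by
      have : ∑ j ∈ Finset.range (μ + 1), lam j ^ q ^ r * X t ^ q ^ (r + j)
          = (∑ j ∈ Finset.range (μ + 1), lam j * X t ^ q ^ j) ^ q ^ r := by
        rw [hqsum]
        refine Finset.sum_congr rfl fun j _ => ?_
        rw [hqmul, hppow, Nat.add_comm j r]
      rw [this, hlam t htμ, zero_pow (pow_ne_zero r (by
          rw [hq]; exact pow_ne_zero s (Fact.out : p.Prime).ne_zero))]
    exact Finset.sum_eq_zero fun i _ => by rw [hzero, mul_zero]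
  · -- the error-span factor vanishes
    have hzero := hσ t (by omega) ht'
    calc ∑ i ∈ Finset.range (δ + ε + 1), (σ i * E t ^ q ^ i) *
            ∑ j ∈ Finset.range (μ + 1), lam j ^ q ^ r * X t ^ q ^ (r + j)
        = (∑ i ∈ Finset.range (δ + ε + 1), σ i * E t ^ q ^ i) *
            ∑ j ∈ Finset.range (μ + 1), lam j ^ q ^ r * X t ^ q ^ (r + j) := by
          rw [Finset.sum_mul]
      _ = 0 := by rw [hzero, zero_mul]
end
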